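/- arXiv:1001.3923 — 10 statements merged into one kernel-verified Lean document; each statement's English description precedes it below -/
import Mathlib

section
/- Let n ≥ 2, let G = ℝⁿ \ {0}, let x ∈ G and let 0 < r ≤ log(1+√3). Then the j-metric ball B_j(x,r) is close-to-convex. -/
/-- A half-line in a real vector space: `{z + t • y : t > 0}` or `{z + t • y : t ≥ 0}`
for some point `z` and nonzero direction `y`. -/
def IsHalfLine {E : Type*} [AddCommGroup E] [Module ℝ E] (S : Set E) : Prop :=
  ∃ z y : E, y ≠ 0 ∧
    (S = {x | ∃ t : ℝ, 0 < t ∧ x = z + t • y} ∨ S = {x | ∃ t : ℝ, 0 ≤ t ∧ x = z + t • y})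

/-- A set `G` is close-to-convex if its complement is the union of a family of
pairwise disjoint half-lines. -/
def CloseToConvex {E : Type*} [AddCommGroup E] [Module ℝ E] (G : Set E) : Prop :=
  ∃ 𝒞 : Set (Set E), (∀ S ∈ 𝒞, IsHalfLine S) ∧ 𝒞.Pairwise Disjoint ∧ ⋃₀ 𝒞 = Gᶜ

/-- The distance ratio metric (`j`-metric) of a domain `G`:
`j_G(x,y) = log (1 + |x-y| / min (d(x), d(y)))` where `d` is the distance to `∂G`. -/
noncomputable def jDist {E : Type*} [NormedAddCommGroup E] (G : Set E) (x y : E) : ℝ :=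
  Real.log (1 + dist x y / min (Metric.infDist x (frontier G)) (Metric.infDist y (frontier G)))

/-- The `j`-metric ball `B_j(x,r) = {y ∈ G : j_G(x,y) < r}`. -/
def jBall {E : Type*} [NormedAddCommGroup E] (G : Set E) (x : E) (r : ℝ) : Set E :=
  {y ∈ G | jDist G x y < r}

/-! Put `k = exp r - 1`; then `B_j(x, r) = {y : ‖y - x‖ < k · min (‖x‖, ‖y‖)}`. Write points
as `w + t • e` with `e = x / ‖x‖`, `w ⊥ e`, `H = ‖w‖²`, `a = ‖x‖`. On such a line the ball is cut
out by `H + (t - a)² < k² a²`, an interval, and by `g t = k² (H + t²) - H - (t - a)² > 0`. For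
`k ≤ 1`, `g` is concave. For `1 < k² ≤ 3` every point of the interval with `g t > 0` lies to the
right of the vertex of the convex parabola `g`, where `g` increases. So every line parallel to `x`
meets the ball in an interval, and the complement of an interval in a line is at most two disjoint
half-lines. -/

open scoped InnerProductSpace

section Module

variable {E : Type*} [AddCommGroup E] [Module ℝ E]

lemma IsHalfLine.image_add_smul {S : Set ℝ} (hS : IsHalfLine S) (z : E) {e : E} (he : e ≠ 0) :
    IsHalfLine ((fun t : ℝ => z + t • e) '' S) := by
  obtain ⟨s, y, hy, rfl | rfl⟩ := hS <;>
  refine ⟨z + s • e, y • e, smul_ne_zero hy he, ?_⟩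
  · left
    ext p
    simp [add_smul, smul_smul, add_assoc, eq_comm]
  · right
    ext p
    simp [add_smul, smul_smul, add_assoc, eq_comm]

def lineSlice (G : Set E) (z e : E) : Set ℝ := {t | z + t • e ∈ G}

lemma lineSlice_add_smul (G : Set E) (z e : E) (s : ℝ) :
    lineSlice G (z + s • e) e = (s + ·) ⁻¹' lineSlice G z e := by
  ext t
  simp [lineSlice, add_smul, add_assoc]

theorem closeToConvex_of_forall_lineSlice {G : Set E} {e : E} (he : e ≠ 0)
    (h : ∀ z, CloseToConvex (lineSlice G z e)) : CloseToConvex G := by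
  -- Each line parallel to `e` is `w + ℝ • e` for exactly one `w ∈ ker φ`.
  obtain ⟨φ, hφ⟩ := Module.Projective.exists_dual_eq_one ℝ he
  choose 𝒞 h𝒞 h𝒞disj h𝒞union using h
  have hline : ∀ {w₁ w₂ : E} {t₁ t₂ : ℝ}, φ w₁ = 0 → φ w₂ = 0 →
      w₁ + t₁ • e = w₂ + t₂ • e → w₁ = w₂ ∧ t₁ = t₂ := by
    intro w₁ w₂ t₁ t₂ hw₁ hw₂ heq
    have ht : t₁ = t₂ := by simpa [hw₁, hw₂, hφ] using congrArg φ heq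
    exact ⟨by simpa [ht] using heq, ht⟩
  refine ⟨{S | ∃ w, φ w = 0 ∧ ∃ T ∈ 𝒞 w, S = (fun t : ℝ => w + t • e) '' T}, ?_, ?_, ?_⟩
  · rintro _ ⟨w, -, T, hT, rfl⟩
    exact (h𝒞 w T hT).image_add_smul w he
  · rintro _ ⟨w₁, hw₁, T₁, hT₁, rfl⟩ _ ⟨w₂, hw₂, T₂, hT₂, rfl⟩ hne
    refine Set.disjoint_left.2 ?_
    rintro _ ⟨t₁, ht₁, rfl⟩ ⟨t₂, ht₂, heq⟩
    obtain ⟨rfl, rfl⟩ := hline hw₂ hw₁ heq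
    have hT : T₁ ≠ T₂ := by rintro rfl; exact hne rfl
    exact Set.disjoint_left.1 (h𝒞disj w₂ hT₁ hT₂ hT) ht₁ ht₂
  · ext p
    constructor
    · rintro ⟨_, ⟨w, -, T, hT, rfl⟩, t, ht, rfl⟩
      have : t ∈ ⋃₀ 𝒞 w := ⟨T, hT, ht⟩
      rwa [h𝒞union] at this
    · intro hp
      have hp' : φ p ∈ ⋃₀ 𝒞 (p - φ p • e) := by
        rw [h𝒞union]
        simpa [lineSlice] using hp
      obtain ⟨T, hT, ht⟩ := hp'
      exact ⟨_, ⟨p - φ p • e, by simp [hφ], T, hT, rfl⟩, φ p, ht, by simp⟩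

end Module

lemma isHalfLine_of_isUpperSet {S : Set ℝ} (hS : IsUpperSet S) (hb : BddBelow S)
    (hne : S.Nonempty) : IsHalfLine S := by
  refine ⟨sInf S, 1, one_ne_zero, ?_⟩
  have hIoi : Set.Ioi (sInf S) ⊆ S := fun t ht =>
    let ⟨u, hu, hut⟩ := exists_lt_of_csInf_lt hne ht
    hS hut.le hu
  by_cases hmem : sInf S ∈ S
  · refine Or.inr (Set.ext fun t => ⟨fun ht => ⟨t - sInf S, ?_, by simp⟩, ?_⟩)
    · linarith [csInf_le hb ht]
    · rintro ⟨u, hu, rfl⟩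
      exact hS (by simpa using hu) hmem
  · refine Or.inl (Set.ext fun t => ⟨fun ht => ⟨t - sInf S, ?_, by simp⟩, ?_⟩)
    · have := (csInf_le hb ht).lt_of_ne (fun h => hmem (h ▸ ht))
      linarith
    · rintro ⟨u, hu, rfl⟩
      exact hIoi (by simpa using hu)

lemma isHalfLine_of_isLowerSet {S : Set ℝ} (hS : IsLowerSet S) (hb : BddAbove S)
    (hne : S.Nonempty) : IsHalfLine S := by
  have := (isHalfLine_of_isUpperSet hS.neg (bddBelow_neg.2 hb) hne.neg).image_add_smul (0 : ℝ)
    (neg_ne_zero.2 (one_ne_zero (α := ℝ)))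
  simpa [Set.image_neg_eq_neg] using this

lemma Set.OrdConnected.closeToConvex {A : Set ℝ} (hA : A.OrdConnected) : CloseToConvex A := by
  -- Split the complement at a point `c` of `A` (any point if `A = ∅`).
  obtain ⟨c, hc⟩ : ∃ c : ℝ, A.Nonempty → c ∈ A := by
    by_cases h : A.Nonempty
    · exact ⟨h.some, fun _ => h.some_mem⟩
    · exact ⟨0, fun h' => (h h').elim⟩
  set U := {t | c ≤ t ∧ t ∉ A}
  set D := {t | t < c ∧ t ∉ A}
  have hU : IsUpperSet U := fun t t' htt' ⟨hct, htA⟩ =>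
    ⟨hct.trans htt', fun ht'A => htA (hA.out (hc ⟨t', ht'A⟩) ht'A ⟨hct, htt'⟩)⟩
  have hD : IsLowerSet D := fun t t' htt' ⟨htc, htA⟩ =>
    ⟨htt'.trans_lt htc, fun ht'A => htA (hA.out ht'A (hc ⟨t', ht'A⟩) ⟨htt', htc.le⟩)⟩
  have hUD : Disjoint U D := Set.disjoint_left.2 fun t hU hD => hD.1.not_ge hU.1
  refine ⟨{U, D} \ {∅}, ?_, ?_, ?_⟩
  · rintro S ⟨rfl | rfl, hS⟩ <;> rw [Set.mem_singleton_iff, ← ne_eq,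
      ← Set.nonempty_iff_ne_empty] at hS
    · exact isHalfLine_of_isUpperSet hU ⟨c, fun t ht => ht.1⟩ hS
    · exact isHalfLine_of_isLowerSet hD ⟨c, fun t ht => ht.1.le⟩ hS
  · exact (Set.pairwise_pair.2 fun _ => ⟨hUD, hUD.symm⟩).mono Set.sdiff_subset
  · rw [Set.sUnion_sdiff_singleton_empty, Set.sUnion_pair]
    ext t
    by_cases hct : c ≤ t <;> simp [U, D, hct, not_le.1]

lemma neg_lt_mul_of_mem_jBall_section {H a k t : ℝ} (ha : 0 < a) (hk1 : 1 < k ^ 2)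
    (hk3 : k ^ 2 ≤ 3) (h₁ : H + (t - a) ^ 2 < k ^ 2 * a ^ 2)
    (h₂ : H + (t - a) ^ 2 < k ^ 2 * (H + t ^ 2)) : -a < (k ^ 2 - 1) * t := by
  set μ := k ^ 2 - 1
  have hμ : 0 < μ := by linarith
  by_contra! hle
  -- `μ ≤ 2` makes the last term nonnegative: this is where `log (1 + √3)` comes from.
  nlinarith [mul_pos hμ (show 0 < k ^ 2 * (H + t ^ 2) - H - (t - a) ^ 2 by linarith),
    mul_lt_mul_of_pos_left h₁ (mul_pos hμ hμ),
    mul_nonneg (mul_nonneg (show (0 : ℝ) ≤ 1 + μ by linarith) ha.le)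
      (show 0 ≤ -(μ * t + a) by linarith),
    mul_nonneg (show 0 ≤ 2 - μ by linarith) (sq_nonneg ((1 + μ) * a))]

theorem ordConnected_jBall_section {H a k : ℝ} (ha : 0 < a) (hk3 : k ^ 2 ≤ 3) :
    {t : ℝ | H + (t - a) ^ 2 < k ^ 2 * a ^ 2 ∧
      H + (t - a) ^ 2 < k ^ 2 * (H + t ^ 2)}.OrdConnected := by
  refine ⟨fun t₁ ⟨h₁₁, h₁₂⟩ t₂ ⟨h₂₁, h₂₂⟩ t ⟨ht₁, ht₂⟩ => ⟨?_, ?_⟩⟩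
  · rcases le_total t a with h | h
    · nlinarith [mul_nonneg (sub_nonneg.2 ht₁) (show 0 ≤ 2 * a - t - t₁ by linarith)]
    · nlinarith [mul_nonneg (sub_nonneg.2 ht₂) (show 0 ≤ t + t₂ - 2 * a by linarith)]
  rcases le_or_gt (k ^ 2) 1 with hk | hk
  · rcases ht₁.eq_or_lt with rfl | ht₁'
    · exact h₁₂
    nlinarith [mul_nonneg (sub_nonneg.2 ht₂)
        (show 0 ≤ k ^ 2 * (H + t₁ ^ 2) - H - (t₁ - a) ^ 2 by linarith),
      mul_pos (sub_pos.2 ht₁') (show 0 < k ^ 2 * (H + t₂ ^ 2) - H - (t₂ - a) ^ 2 by linarith),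
      mul_nonneg (sub_nonneg.2 hk) (mul_nonneg (mul_nonneg (sub_nonneg.2 ht₁) (sub_nonneg.2 ht₂))
        (sub_nonneg.2 (ht₁.trans ht₂)))]
  · have := neg_lt_mul_of_mem_jBall_section ha hk hk3 h₁₁ h₁₂
    nlinarith [mul_nonneg (sub_nonneg.2 ht₁)
      (show 0 ≤ (k ^ 2 - 1) * (t + t₁) + 2 * a by nlinarith)]

section Normed

variable {F : Type*} [NormedAddCommGroup F] [NormedSpace ℝ F]

lemma jDist_compl_zero [Nontrivial F] (x y : F) :
    jDist ({0}ᶜ : Set F) x y = Real.log (1 + ‖x - y‖ / min ‖x‖ ‖y‖) := by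
  simp [jDist, frontier, dist_eq_norm]

lemma mem_jBall_compl_zero_iff {x : F} (hx : x ≠ 0) (y : F) (r : ℝ) :
    y ∈ jBall ({0}ᶜ : Set F) x r ↔ ‖y - x‖ < (Real.exp r - 1) * min ‖x‖ ‖y‖ := by
  have : Nontrivial F := nontrivial_of_ne x 0 hx
  rw [jBall, Set.mem_ofPred_eq, Set.mem_compl_singleton_iff, jDist_compl_zero, norm_sub_rev]
  constructor
  · rintro ⟨hy, hlt⟩
    have hm : 0 < min ‖x‖ ‖y‖ := lt_min (norm_pos_iff.2 hx) (norm_pos_iff.2 hy)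
    rwa [Real.log_lt_iff_lt_exp (by positivity), ← lt_sub_iff_add_lt', div_lt_iff₀ hm] at hlt
  · intro h
    have hy : y ≠ 0 := by
      rintro rfl
      simp only [zero_sub, norm_neg, norm_zero, min_eq_right (norm_nonneg x), mul_zero] at h
      exact (norm_nonneg x).not_gt h
    have hm : 0 < min ‖x‖ ‖y‖ := lt_min (norm_pos_iff.2 hx) (norm_pos_iff.2 hy)
    refine ⟨hy, ?_⟩
    rwa [Real.log_lt_iff_lt_exp (by positivity), ← lt_sub_iff_add_lt', div_lt_iff₀ hm]

end Normed

section InnerProduct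

variable {F : Type*} [NormedAddCommGroup F] [InnerProductSpace ℝ F]

lemma lineSlice_jBall_compl_zero {e w : F} (he : ‖e‖ = 1) (hw : ⟪w, e⟫_ℝ = 0) {a r : ℝ}
    (ha : 0 < a) (hr : 0 ≤ r) :
    lineSlice (jBall {0}ᶜ (a • e) r) w e = {t | ‖w‖ ^ 2 + (t - a) ^ 2 < (Real.exp r - 1) ^ 2 * a ^ 2
      ∧ ‖w‖ ^ 2 + (t - a) ^ 2 < (Real.exp r - 1) ^ 2 * (‖w‖ ^ 2 + t ^ 2)} := by
  have hk : 0 ≤ Real.exp r - 1 := by linarith [Real.one_le_exp hr]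
  have hnorm (s : ℝ) : ‖w + s • e‖ ^ 2 = ‖w‖ ^ 2 + s ^ 2 := by
    rw [norm_add_sq_real, inner_smul_right, hw, norm_smul, he, Real.norm_eq_abs, mul_one, sq_abs]
    ring
  have hsq {u : F} {c : ℝ} (hc : 0 ≤ c) : ‖u‖ < c ↔ ‖u‖ ^ 2 < c ^ 2 :=
    (pow_lt_pow_iff_left₀ (norm_nonneg u) hc two_ne_zero).symm
  have hae : a • e ≠ 0 := smul_ne_zero ha.ne' (norm_ne_zero_iff.1 (he.symm ▸ one_ne_zero))
  ext t
  have hsub : w + t • e - a • e = w + (t - a) • e := by rw [sub_smul]; abel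
  simp only [lineSlice, Set.mem_ofPred_eq, mem_jBall_compl_zero_iff hae, hsub,
    mul_min_of_nonneg _ _ hk, lt_min_iff, norm_smul, he, Real.norm_of_nonneg ha.le, mul_one]
  rw [hsq (by positivity), hsq (by positivity), mul_pow, mul_pow, hnorm, hnorm]

lemma ordConnected_lineSlice_jBall_compl_zero {e : F} (he : ‖e‖ = 1) {a r : ℝ} (ha : 0 < a)
    (hr₀ : 0 ≤ r) (hr : (Real.exp r - 1) ^ 2 ≤ 3) (z : F) :
    (lineSlice (jBall {0}ᶜ (a • e) r) z e).OrdConnected := by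
  obtain ⟨w, s, hw, rfl⟩ : ∃ (w : F) (s : ℝ), ⟪w, e⟫_ℝ = 0 ∧ z = w + s • e :=
    ⟨z - ⟪z, e⟫_ℝ • e, ⟪z, e⟫_ℝ, by simp [inner_sub_left, inner_smul_left, he], by abel⟩
  rw [lineSlice_add_smul, lineSlice_jBall_compl_zero he hw ha hr₀]
  exact (ordConnected_jBall_section ha hr).preimage_mono fun _ _ h => (add_le_add_iff_left s).2 h

end InnerProduct

theorem jBall_closeToConvex_of_puncturedSpace_general {n : ℕ}
    (x : EuclideanSpace ℝ (Fin n)) (hx : x ≠ 0)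
    (r : ℝ) (hr0 : 0 < r) (hr : r ≤ Real.log (1 + Real.sqrt 3)) :
    CloseToConvex (jBall ({0}ᶜ : Set (EuclideanSpace ℝ (Fin n))) x r) := by
  have hk : (Real.exp r - 1) ^ 2 ≤ 3 := by
    have hexp : Real.exp r ≤ 1 + √3 := by
      simpa [Real.exp_log (by positivity : (0 : ℝ) < 1 + √3)] using Real.exp_le_exp.2 hr
    exact (Real.le_sqrt' (by linarith [Real.add_one_lt_exp hr0.ne'])).1 (by linarith)
  set e := ‖x‖⁻¹ • x
  have he : ‖e‖ = 1 := norm_smul_inv_norm hx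
  have hxe : x = ‖x‖ • e := by simp [e, smul_smul, hx]
  rw [hxe]
  exact closeToConvex_of_forall_lineSlice (norm_ne_zero_iff.1 (he.symm ▸ one_ne_zero)) fun z =>
    (ordConnected_lineSlice_jBall_compl_zero he (norm_pos_iff.2 hx) hr0.le hk z).closeToConvex

/-- Klén, Theorem 2.1 (first part): in the punctured space `G = ℝⁿ \ {0}`, `n ≥ 2`,
for `x ∈ G` and `0 < r ≤ log (1 + √3)` the `j`-metric ball `B_j(x,r)` is close-to-convex. -/
theorem jBall_closeToConvex_of_puncturedSpace {n : ℕ} (hn : 2 ≤ n)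
    (x : EuclideanSpace ℝ (Fin n)) (hx : x ≠ 0)
    (r : ℝ) (hr0 : 0 < r) (hr : r ≤ Real.log (1 + Real.sqrt 3)) :
    CloseToConvex (jBall ({0}ᶜ : Set (EuclideanSpace ℝ (Fin n))) x r) :=
  jBall_closeToConvex_of_puncturedSpace_general x hx r hr0 hr
end

section
/- Let G = ℝ² \ {0}, let x ∈ G and let r > log(1+√3). Then the j-metric ball B_j(x,r) is not close-to-convex. -/
/-!
Put `M = eʳ - 1 > √3`. Off the origin, `w ∉ B_j(x, r)` iff `M ‖x‖ ≤ ‖x - w‖` or `M ‖w‖ ≤ ‖x - w‖`,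
so the complement of the ball is the exterior of `B(x, M ‖x‖)` together with the closed Apollonius
disk `D = {M ‖w‖ ≤ ‖x - w‖}`. As `M² > 3`, `D` meets the exterior of `B(x, M ‖x‖)` only strictly
behind its centre. Let `p₊, p₋` be the ends of the diameter of `D` perpendicular to `x`. A half-line
of the complement through `p±` is connected and unbounded, so it meets `D` outside `B(x, M ‖x‖)`;
hence it points away from `x` and towards the side of `p∓`. So the half-lines through `p₊` and `p₋`
are distinct and cross each other, contradicting disjointness.
-/

open Real Set Metric Topology RealInnerProductSpace

theorem frontier_compl_singleton {X : Type*} [TopologicalSpace X] [T1Space X] (a : X)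
    [(𝓝[≠] a).NeBot] : frontier ({a}ᶜ : Set X) = {a} := by
  rw [frontier_compl, isClosed_singleton.frontier_eq, interior_singleton, sdiff_empty]

theorem jBall_compl_singleton_zero {E : Type*} [NormedAddCommGroup E] [NormedSpace ℝ E]
    [Nontrivial E] {x : E} (hx : x ≠ 0) (r : ℝ) :
    jBall {0}ᶜ x r = {w | dist x w < (exp r - 1) * min ‖x‖ ‖w‖} := by
  ext w
  rcases eq_or_ne w 0 with rfl | hw
  · simp [jBall]
  have hmin : 0 < min ‖x‖ ‖w‖ := lt_min (norm_pos_iff.mpr hx) (norm_pos_iff.mpr hw)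
  have hpos : 0 < 1 + dist x w / min ‖x‖ ‖w‖ := by positivity
  simp only [jBall, jDist, frontier_compl_singleton, infDist_singleton, dist_zero_right,
    mem_ofPred_eq, mem_compl_singleton_iff, hw, ne_eq, not_false_eq_true, true_and,
    log_lt_iff_lt_exp hpos]
  rw [← lt_sub_iff_add_lt', div_lt_iff₀ hmin]

theorem IsHalfLine.exists_forall_add_smul_mem {E : Type*} [AddCommGroup E] [Module ℝ E]
    {S : Set E} (hS : IsHalfLine S) :
    ∃ y : E, y ≠ 0 ∧ ∀ p ∈ S, ∀ t : ℝ, 0 ≤ t → p + t • y ∈ S := by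
  obtain ⟨z, y, hy, hS | hS⟩ := hS <;> refine ⟨y, hy, ?_⟩ <;> subst hS <;>
    rintro _ ⟨s, hs, rfl⟩ t ht <;> exact ⟨s + t, by linarith, by rw [add_smul]; abel⟩

theorem exists_add_smul_mem_of_forall_mem_or_le_dist {E : Type*} [NormedAddCommGroup E]
    [NormedSpace ℝ E] {F : Set E} (hF : IsClosed F) {p x y : E} (hp : p ∈ F) (hy : y ≠ 0) {R : ℝ}
    (hray : ∀ t : ℝ, 0 ≤ t → p + t • y ∈ F ∨ R ≤ dist x (p + t • y)) :
    ∃ t : ℝ, 0 ≤ t ∧ p + t • y ∈ F ∧ R ≤ dist x (p + t • y) := by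
  have hconn : IsPreconnected ((fun t : ℝ => p + t • y) '' Ici 0) :=
    isPreconnected_Ici.image _ (by fun_prop)
  have hfar : ∃ t : ℝ, 0 ≤ t ∧ R ≤ dist x (p + t • y) := by
    set t₀ := (|R| + dist x p) / ‖y‖
    have ht₀ : 0 ≤ t₀ := by positivity
    refine ⟨t₀, ht₀, ?_⟩
    calc R ≤ |R| := le_abs_self R
      _ = ‖t₀ • y‖ - dist x p := by
        rw [norm_smul, Real.norm_of_nonneg ht₀, div_mul_cancel₀ _ (norm_ne_zero_iff.mpr hy)]; ring
      _ ≤ dist x (p + t₀ • y) := by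
        have := dist_triangle p x (p + t₀ • y)
        rw [dist_self_add_right, dist_comm p x] at this
        linarith
  obtain ⟨t₀, ht₀, hRt₀⟩ := hfar
  obtain ⟨_, ⟨t, ht, rfl⟩, hF, hR⟩ := isPreconnected_closed_iff.mp hconn F {w | R ≤ dist x w}
    hF (isClosed_le continuous_const (by fun_prop))
    (by rintro _ ⟨t, ht, rfl⟩; exact hray t ht) ⟨p, ⟨0, self_mem_Ici, by simp⟩, hp⟩
    ⟨_, ⟨t₀, ht₀, rfl⟩, hRt₀⟩
  exact ⟨t, ht, hF, hR⟩

section Apollonius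

variable {E : Type*} [NormedAddCommGroup E] [InnerProductSpace ℝ E]

theorem inner_sq_add_inner_sq_le_of_inner_eq_zero {x e : E} (he : ⟪e, x⟫ = 0)
    (hex : ‖e‖ = ‖x‖) (w : E) : ⟪w, x⟫ ^ 2 + ⟪w, e⟫ ^ 2 ≤ ‖x‖ ^ 2 * ‖w‖ ^ 2 := by
  have h := real_inner_self_nonneg (x := ‖x‖ ^ 2 • w - ⟪w, x⟫ • x - ⟪w, e⟫ • e)
  simp only [inner_sub_left, inner_sub_right, inner_smul_left, inner_smul_right,
    real_inner_self_eq_norm_sq, real_inner_comm e x, he, hex, real_inner_comm w,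
    RCLike.conj_to_real] at h
  rcases eq_or_ne x 0 with rfl | hx
  · simp_all
  have : 0 < ‖x‖ ^ 2 := by positivity
  nlinarith

/-- For `e ⊥ x` with `‖e‖ = ‖x‖`, the point of the Apollonius sphere `M ‖w‖ = ‖x - w‖`
(centre `-(M² - 1)⁻¹ • x`, radius `M ‖x‖ / (M² - 1)`) farthest in the direction `e`. -/
noncomputable def apolloniusPoint (M : ℝ) (x e : E) : E := (M ^ 2 - 1)⁻¹ • (M • e - x)

variable {M : ℝ} {x e : E}

theorem inner_apolloniusPoint_left (he : ⟪e, x⟫ = 0) :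
    ⟪apolloniusPoint M x e, x⟫ = -‖x‖ ^ 2 / (M ^ 2 - 1) := by
  simp only [apolloniusPoint, inner_smul_left, inner_sub_left, he, real_inner_self_eq_norm_sq,
    RCLike.conj_to_real]
  ring

theorem inner_apolloniusPoint_right (he : ⟪e, x⟫ = 0) (hex : ‖e‖ = ‖x‖) :
    ⟪apolloniusPoint M x e, e⟫ = M * ‖x‖ ^ 2 / (M ^ 2 - 1) := by
  simp only [apolloniusPoint, inner_smul_left, inner_sub_left, real_inner_comm e x, he,
    real_inner_self_eq_norm_sq, hex, RCLike.conj_to_real]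
  ring

theorem norm_apolloniusPoint_sq (he : ⟪e, x⟫ = 0) (hex : ‖e‖ = ‖x‖) :
    ‖apolloniusPoint M x e‖ ^ 2 = (M ^ 2 + 1) * ‖x‖ ^ 2 / (M ^ 2 - 1) ^ 2 := by
  rw [← real_inner_self_eq_norm_sq]
  nth_rewrite 1 [apolloniusPoint]
  rw [real_inner_smul_left, inner_sub_left, real_inner_smul_left, real_inner_comm _ e,
    real_inner_comm _ x, inner_apolloniusPoint_left he, inner_apolloniusPoint_right he hex,
    div_eq_mul_inv _ ((M ^ 2 - 1) ^ 2), ← inv_pow]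
  ring

theorem dist_apolloniusPoint_sq (hM : M ^ 2 ≠ 1) (he : ⟪e, x⟫ = 0) (hex : ‖e‖ = ‖x‖) :
    dist x (apolloniusPoint M x e) ^ 2 = M ^ 2 * (M ^ 2 + 1) * ‖x‖ ^ 2 / (M ^ 2 - 1) ^ 2 := by
  rw [dist_eq_norm, norm_sub_sq_real, real_inner_comm, inner_apolloniusPoint_left he,
    norm_apolloniusPoint_sq he hex]
  field_simp [sub_ne_zero.mpr hM]
  ring

theorem apolloniusPoint_sub_apolloniusPoint_neg (M : ℝ) (x e : E) :
    apolloniusPoint M x e - apolloniusPoint M x (-e) = (2 * M / (M ^ 2 - 1)) • e := by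
  simp only [apolloniusPoint, ← smul_sub]
  module

theorem dist_apolloniusPoint (hM₀ : 0 ≤ M) (hM : M ^ 2 ≠ 1) (he : ⟪e, x⟫ = 0)
    (hex : ‖e‖ = ‖x‖) : dist x (apolloniusPoint M x e) = M * ‖apolloniusPoint M x e‖ := by
  rw [← sq_eq_sq₀ dist_nonneg (by positivity), dist_apolloniusPoint_sq hM he hex, mul_pow,
    norm_apolloniusPoint_sq he hex]
  ring

/-- Since `M² > 3`, the disk `M ‖w‖ ≤ ‖x - w‖` meets the complement of the ball `B(x, M ‖x‖)`
only strictly behind its centre; the bound on `⟪w, e⟫` then comes from Bessel's inequality. -/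
theorem inner_sub_apolloniusPoint_neg (hM : √3 < M) (hx : x ≠ 0) (he : ⟪e, x⟫ = 0)
    (hex : ‖e‖ = ‖x‖) {w : E} (hw : M * ‖w‖ ≤ dist x w) (hwx : M * ‖x‖ ≤ dist x w) :
    ⟪w - apolloniusPoint M x e, x⟫ < 0 ∧ ⟪w - apolloniusPoint M x e, e⟫ < 0 := by
  have hM₀ : 0 < M := (Real.sqrt_nonneg 3).trans_lt hM
  have hD : 2 < M ^ 2 - 1 := by linarith [Real.lt_sq_of_sqrt_lt hM]
  have hX : 0 < ‖x‖ ^ 2 := by positivity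
  rw [inner_sub_left, inner_sub_left, inner_apolloniusPoint_left he,
    inner_apolloniusPoint_right he hex, sub_neg, sub_neg, lt_div_iff₀ (by linarith),
    lt_div_iff₀ (by linarith)]
  set D := M ^ 2 - 1
  have hdist : dist x w ^ 2 = ‖x‖ ^ 2 - 2 * ⟪w, x⟫ + ‖w‖ ^ 2 := by
    rw [dist_eq_norm, norm_sub_sq_real, real_inner_comm]
  have hw' : D * ‖w‖ ^ 2 ≤ ‖x‖ ^ 2 - 2 * ⟪w, x⟫ := by
    nlinarith [pow_le_pow_left₀ (by positivity) hw 2]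
  have hwx' : D * ‖x‖ ^ 2 ≤ ‖w‖ ^ 2 - 2 * ⟪w, x⟫ := by
    nlinarith [pow_le_pow_left₀ (by positivity) hwx 2]
  have hax : 2 * ⟪w, x⟫ ≤ ‖x‖ ^ 2 * (1 - D) := by
    refine le_of_mul_le_mul_right ?_ (by linarith : 0 < D + 1)
    nlinarith [mul_le_mul_of_nonneg_left hwx' (by linarith : 0 ≤ D)]
  have ha : ⟪w, x⟫ * D + ‖x‖ ^ 2 < 0 := by
    nlinarith [mul_le_mul_of_nonneg_left hax (by linarith : 0 ≤ D),
      mul_pos hX (mul_pos (by linarith : 0 < D - 2) (by linarith : 0 < D + 1))]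
  refine ⟨by linarith, ?_⟩
  have hbessel := inner_sq_add_inner_sq_le_of_inner_eq_zero he hex w
  have hb : (⟪w, e⟫ * D) ^ 2 < (M * ‖x‖ ^ 2) ^ 2 := by
    nlinarith [mul_le_mul_of_nonneg_left hbessel (sq_nonneg D),
      mul_le_mul_of_nonneg_left hw' (mul_nonneg (by linarith : 0 ≤ D) hX.le), sq_pos_of_neg ha]
  exact (abs_lt_of_sq_lt_sq hb (by positivity)).trans_le' (le_abs_self _)

theorem inner_neg_of_forall_add_smul_apolloniusPoint (hM : √3 < M) (hx : x ≠ 0)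
    (he : ⟪e, x⟫ = 0) (hex : ‖e‖ = ‖x‖) {y : E} (hy : y ≠ 0)
    (hray : ∀ t : ℝ, 0 ≤ t → M * min ‖x‖ ‖apolloniusPoint M x e + t • y‖ ≤
      dist x (apolloniusPoint M x e + t • y)) :
    ⟪y, x⟫ < 0 ∧ ⟪y, e⟫ < 0 := by
  have hM₀ : 0 ≤ M := (Real.sqrt_nonneg 3).trans hM.le
  obtain ⟨t, ht, hF, hR⟩ := exists_add_smul_mem_of_forall_mem_or_le_dist
    (F := {w | M * ‖w‖ ≤ dist x w}) (isClosed_le (by fun_prop) (by fun_prop))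
    (dist_apolloniusPoint hM₀ (by nlinarith [Real.lt_sq_of_sqrt_lt hM]) he hex).ge hy
    (R := M * ‖x‖) fun t ht => by
      have h := hray t ht
      rw [mul_min_of_nonneg _ _ hM₀, min_le_iff] at h
      exact h.symm
  have hkey := inner_sub_apolloniusPoint_neg hM hx he hex hF hR
  rw [add_sub_cancel_left, real_inner_smul_left, real_inner_smul_left] at hkey
  exact ⟨neg_of_mul_neg_right hkey.1 ht, neg_of_mul_neg_right hkey.2 ht⟩

end Apollonius

section TwoDim

open Module

variable {E : Type*} [NormedAddCommGroup E] [InnerProductSpace ℝ E] [Fact (finrank ℝ E = 2)]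
  (o : Orientation ℝ E (Fin 2))

local notation "J" => o.rightAngleRotation

theorem Orientation.eq_zero_of_inner_eq_zero_of_inner_rightAngleRotation_eq_zero {x v : E}
    (hx : x ≠ 0) (h : ⟪v, x⟫ = 0) (hJ : ⟪v, J x⟫ = 0) : v = 0 := by
  have := o.inner_sq_add_areaForm_sq x v
  rw [← o.inner_rightAngleRotation_left, real_inner_comm, h, real_inner_comm, hJ] at this
  simpa [hx] using this

theorem Orientation.exists_add_smul_eq_add_smul {x p₁ p₂ y₁ y₂ : E} (hx : x ≠ 0)
    (hp : ⟪p₁ - p₂, x⟫ = 0) (hpJ : 0 < ⟪p₁ - p₂, J x⟫)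
    (hy₁ : ⟪y₁, x⟫ < 0) (hy₁J : ⟪y₁, J x⟫ < 0)
    (hy₂ : ⟪y₂, x⟫ < 0) (hy₂J : 0 < ⟪y₂, J x⟫) :
    ∃ s σ : ℝ, 0 ≤ s ∧ 0 ≤ σ ∧ p₁ + s • y₁ = p₂ + σ • y₂ := by
  -- Cramer's rule for the components along `x` and `J x` of `p₁ - p₂ + s • y₁ - σ • y₂ = 0`
  set W := ⟪y₁, x⟫ * ⟪y₂, J x⟫ - ⟪y₂, x⟫ * ⟪y₁, J x⟫
  have hW : W < 0 := by nlinarith [mul_pos_of_neg_of_neg hy₂ hy₁J]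
  set l := ⟪p₁ - p₂, J x⟫ / W
  have hl : l < 0 := div_neg_of_pos_of_neg hpJ hW
  refine ⟨l * ⟪y₂, x⟫, l * ⟪y₁, x⟫, by nlinarith, by nlinarith, ?_⟩
  have hlW : l * W = ⟪p₁ - p₂, J x⟫ := div_mul_cancel₀ _ hW.ne
  rw [inner_sub_left] at hp hlW
  rw [← sub_eq_zero]
  refine o.eq_zero_of_inner_eq_zero_of_inner_rightAngleRotation_eq_zero hx ?_ ?_ <;>
    simp only [inner_sub_left, inner_add_left, real_inner_smul_left]
  · linear_combination hp
  · linear_combination -hlW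

variable {M : ℝ} {x : E}

theorem Orientation.exists_apolloniusPoint_add_smul_eq (hM : √3 < M) (hx : x ≠ 0) {y₁ y₂ : E}
    (hy₁ : ⟪y₁, x⟫ < 0 ∧ ⟪y₁, J x⟫ < 0)
    (hy₂ : ⟪y₂, x⟫ < 0 ∧ ⟪y₂, (-o).rightAngleRotation x⟫ < 0) :
    ∃ s σ : ℝ, 0 ≤ s ∧ 0 ≤ σ ∧
      apolloniusPoint M x (J x) + s • y₁ =
        apolloniusPoint M x ((-o).rightAngleRotation x) + σ • y₂ := by
  have hM₀ : 0 < M := (Real.sqrt_nonneg 3).trans_lt hM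
  have hM₁ : 0 < M ^ 2 - 1 := by nlinarith [Real.lt_sq_of_sqrt_lt hM]
  rw [o.rightAngleRotation_neg_orientation] at hy₂ ⊢
  rw [inner_neg_right, neg_neg_iff_pos] at hy₂
  refine o.exists_add_smul_eq_add_smul hx ?_ ?_ hy₁.1 hy₁.2 hy₂.1 hy₂.2 <;>
    rw [apolloniusPoint_sub_apolloniusPoint_neg, real_inner_smul_left]
  · rw [o.inner_rightAngleRotation_self, mul_zero]
  · rw [real_inner_self_eq_norm_sq, LinearIsometryEquiv.norm_map]
    exact mul_pos (div_pos (by positivity) hM₁) (pow_pos (norm_pos_iff.mpr hx) 2)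

theorem not_closeToConvex_setOf_dist_lt_mul_min (hx : x ≠ 0) (hM : √3 < M) :
    ¬ CloseToConvex {w : E | dist x w < M * min ‖x‖ ‖w‖} := by
  rintro ⟨𝒞, hhalf, hdisj, hcover⟩
  have : FiniteDimensional ℝ E := .of_fact_finrank_eq_two
  let o : Orientation ℝ E (Fin 2) := (finBasisOfFinrankEq ℝ E Fact.out).orientation
  have hM₀ : 0 < M := (Real.sqrt_nonneg 3).trans_lt hM
  have hM₁ : M ^ 2 ≠ 1 := by nlinarith [Real.lt_sq_of_sqrt_lt hM]
  have hmem (o' : Orientation ℝ E (Fin 2)) :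
      apolloniusPoint M x (o'.rightAngleRotation x) ∈ ⋃₀ 𝒞 := by
    rw [hcover, mem_compl_iff, mem_ofPred_eq, not_lt]
    exact (mul_le_mul_of_nonneg_left (min_le_right _ _) hM₀.le).trans
      (dist_apolloniusPoint hM₀.le hM₁ (o'.inner_rightAngleRotation_self x)
        (o'.rightAngleRotation.norm_map x)).ge
  have hdir (o' : Orientation ℝ E (Fin 2)) {S y} (hS : S ∈ 𝒞)
      (hp : apolloniusPoint M x (o'.rightAngleRotation x) ∈ S) (hy : y ≠ 0)
      (hSy : ∀ q ∈ S, ∀ t : ℝ, 0 ≤ t → q + t • y ∈ S) :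
      ⟪y, x⟫ < 0 ∧ ⟪y, o'.rightAngleRotation x⟫ < 0 :=
    inner_neg_of_forall_add_smul_apolloniusPoint hM hx (o'.inner_rightAngleRotation_self x)
      (o'.rightAngleRotation.norm_map x) hy fun t ht => by
        have h := hcover ▸ mem_sUnion_of_mem (hSy _ hp t ht) hS
        simpa using h
  obtain ⟨S₁, hS₁, hp₁⟩ := hmem o
  obtain ⟨S₂, hS₂, hp₂⟩ := hmem (-o)
  obtain ⟨y₁, hy₁, hS₁y₁⟩ := (hhalf S₁ hS₁).exists_forall_add_smul_mem
  obtain ⟨y₂, hy₂, hS₂y₂⟩ := (hhalf S₂ hS₂).exists_forall_add_smul_mem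
  have hS₁₂ : S₁ ≠ S₂ := by
    rintro rfl
    have h := (hdir (-o) hS₁ hp₂ hy₁ hS₁y₁).2
    rw [o.rightAngleRotation_neg_orientation, inner_neg_right, neg_neg_iff_pos] at h
    exact (hdir o hS₁ hp₁ hy₁ hS₁y₁).2.not_gt h
  obtain ⟨s, σ, hs, hσ, hq⟩ := o.exists_apolloniusPoint_add_smul_eq hM hx
    (hdir o hS₁ hp₁ hy₁ hS₁y₁) (hdir (-o) hS₂ hp₂ hy₂ hS₂y₂)
  exact disjoint_left.mp (hdisj hS₁ hS₂ hS₁₂) (hS₁y₁ _ hp₁ s hs) (hq ▸ hS₂y₂ _ hp₂ σ hσ)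

end TwoDim

/-- Klén, Theorem 2.1 (sharpness): in the punctured plane `G = ℝ² \ {0}`, for `x ∈ G`
and `r > log (1 + √3)` the `j`-metric disk `B_j(x,r)` is not close-to-convex. -/
theorem jBall_not_closeToConvex_of_puncturedPlane
    (x : EuclideanSpace ℝ (Fin 2)) (hx : x ≠ 0)
    (r : ℝ) (hr : Real.log (1 + Real.sqrt 3) < r) :
    ¬ CloseToConvex (jBall ({0}ᶜ : Set (EuclideanSpace ℝ (Fin 2))) x r) := by
  have : Fact (Module.finrank ℝ (EuclideanSpace ℝ (Fin 2)) = 2) := ⟨finrank_euclideanSpace_fin⟩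
  rw [log_lt_iff_lt_exp (by positivity)] at hr
  rw [jBall_compl_singleton_zero hx]
  exact not_closeToConvex_setOf_dist_lt_mul_min hx (by linarith)
end

section
/- Let r₀ > log(1+√2). Then the equality ((e^{r₀}−1)/(e^{r₀}(e^{r₀}−2)))² + (1 − 1/(e^{r₀}(2−e^{r₀})))² = (e^{r₀}−1)² holds if and only if r₀ = log(1+√3). -/
/-!
Write `t = e^{r₀}` and `u = (t - 1)²`. Since `1 - 1/(t(2 - t)) = (t - 1)²/(t(t - 2))` and
`t(t - 2) = u - 1`, the equation reads `u (1 + u) / (u - 1)² = u`, i.e. `1 + u = (u - 1)²`,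
i.e. `u = 3`. As `r₀ > log(1 + √2)` forces `t > 2`, the denominators are nonzero and the
only admissible root of `(t - 1)² = 3` is `t = 1 + √3`.
-/

open Real

lemma one_sub_one_div_mul_two_sub {x : ℝ} (hx : x * (x - 2) ≠ 0) :
    1 - 1 / (x * (2 - x)) = (x - 1) ^ 2 / (x * (x - 2)) := by
  rw [show x * (2 - x) = -(x * (x - 2)) by ring, div_neg, sub_neg_eq_add, eq_div_iff hx,
    add_mul, one_div_mul_cancel hx]
  ring

lemma one_add_eq_sub_one_sq_iff {u : ℝ} (hu : u ≠ 0) : 1 + u = (u - 1) ^ 2 ↔ u = 3 := by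
  constructor
  · intro h
    have : u * (u - 3) = 0 := by linear_combination -h
    exact sub_eq_zero.mp ((mul_eq_zero.mp this).resolve_left hu)
  · rintro rfl
    norm_num

lemma pythagoras_equation_iff {x : ℝ} (hx1 : x ≠ 1) (hx : x * (x - 2) ≠ 0) :
    ((x - 1) / (x * (x - 2))) ^ 2 + (1 - 1 / (x * (2 - x))) ^ 2 = (x - 1) ^ 2 ↔
      (x - 1) ^ 2 = 3 := by
  have hu : (x - 1) ^ 2 ≠ 0 := pow_ne_zero 2 (sub_ne_zero.mpr hx1)
  have hsum : ((x - 1) / (x * (x - 2))) ^ 2 + ((x - 1) ^ 2 / (x * (x - 2))) ^ 2 =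
      (x - 1) ^ 2 * ((1 + (x - 1) ^ 2) / (x * (x - 2)) ^ 2) := by
    field_simp
  rw [one_sub_one_div_mul_two_sub hx, hsum, mul_eq_left₀ hu,
    div_eq_one_iff_eq (pow_ne_zero 2 hx), show x * (x - 2) = (x - 1) ^ 2 - 1 by ring,
    one_add_eq_sub_one_sq_iff hu]

lemma sub_one_sq_eq_three_iff {x : ℝ} (hx : 1 < x) : (x - 1) ^ 2 = 3 ↔ x = 1 + √3 := by
  rw [← sub_eq_iff_eq_add', eq_comm (a := x - 1), sqrt_eq_iff_eq_sq (by norm_num) (by linarith),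
    eq_comm]

/-- Klén, proof of Theorem 2.1: for `r₀ > log (1 + √2)`, the equality
`((e^r₀-1)/(e^r₀(e^r₀-2)))² + (1 - 1/(e^r₀(2-e^r₀)))² = (e^r₀-1)²` holds
if and only if `r₀ = log (1 + √3)`. -/
theorem pythagoras_condition_iff (r₀ : ℝ) (h : Real.log (1 + Real.sqrt 2) < r₀) :
    ((Real.exp r₀ - 1) / (Real.exp r₀ * (Real.exp r₀ - 2))) ^ 2
        + (1 - 1 / (Real.exp r₀ * (2 - Real.exp r₀))) ^ 2 = (Real.exp r₀ - 1) ^ 2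
      ↔ r₀ = Real.log (1 + Real.sqrt 3) := by
  have ht : 2 < exp r₀ := by
    have := (log_lt_iff_lt_exp (x := 1 + √2) (by positivity)).mp h
    linarith [one_lt_sqrt_two]
  rw [pythagoras_equation_iff (by linarith) (by nlinarith), sub_one_sq_eq_three_iff (by linarith)]
  exact ⟨fun he => by rw [← he, log_exp], fun hr => by rw [hr, exp_log (by positivity)]⟩
end

section
/- Let n ≥ 2, let G = ℝⁿ \ {0}, let x ∈ G and let r > log 3. Then the j-metric ball B_j(x,r) is not close-to-convex. (Indeed, writing B_j(x,r) = Bⁿ(x, d(x)(eʳ−1)) \ closure(Bⁿ(c,s)) as for the punctured space, one has closure(Bⁿ(c,s)) ⊂ Bⁿ(x, d(x)(eʳ−1)), so the complement of B_j(x,r) has a bounded component.) -/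
open Metric

section NormedSpace

variable {E : Type*} [NormedAddCommGroup E] [NormedSpace ℝ E]

theorem IsHalfLine.exists_mem_sphere {S : Set E} (hS : IsHalfLine S) {p : E} (hp : p ∈ S)
    {ρ : ℝ} (hρ : 0 ≤ ρ) : ∃ w ∈ S, w ∈ sphere p ρ := by
  obtain ⟨z, y, hy, hS⟩ := hS
  have hy' : 0 < ‖y‖ := norm_pos_iff.mpr hy
  have hstep : 0 ≤ ρ / ‖y‖ := div_nonneg hρ hy'.le
  have hdist (t : ℝ) : dist (z + (t + ρ / ‖y‖) • y) (z + t • y) = ρ := by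
    rw [dist_eq_norm, add_smul, add_sub_add_left_eq_sub, add_sub_cancel_left, norm_smul,
      Real.norm_of_nonneg hstep, div_mul_cancel₀ _ hy'.ne']
  rcases hS with rfl | rfl
  · obtain ⟨t, ht, rfl⟩ := hp
    exact ⟨_, ⟨t + ρ / ‖y‖, by linarith, rfl⟩, hdist t⟩
  · obtain ⟨t, ht, rfl⟩ := hp
    exact ⟨_, ⟨t + ρ / ‖y‖, by linarith, rfl⟩, hdist t⟩

theorem CloseToConvex.exists_mem_sphere_not_mem {G : Set E} (hG : CloseToConvex G) {p : E}
    (hp : p ∉ G) {ρ : ℝ} (hρ : 0 ≤ ρ) : ∃ w ∈ sphere p ρ, w ∉ G := by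
  obtain ⟨𝒞, hhalf, -, hcover⟩ := hG
  obtain ⟨S, hS𝒞, hpS⟩ : p ∈ ⋃₀ 𝒞 := hcover ▸ hp
  obtain ⟨w, hwS, hw⟩ := (hhalf S hS𝒞).exists_mem_sphere hpS hρ
  exact ⟨w, hw, show w ∈ Gᶜ from hcover ▸ Set.mem_sUnion_of_mem hwS hS𝒞⟩

theorem infDist_frontier_compl_singleton [Nontrivial E] (a v : E) :
    infDist v (frontier {a}ᶜ) = dist v a := by
  rw [frontier_compl, isClosed_singleton.frontier_eq, interior_singleton, Set.sdiff_empty,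
    infDist_singleton]

theorem sphere_subset_jBall_compl_singleton {a x : E} (hx : x ≠ a) {r : ℝ}
    (hr : Real.log 3 < r) : sphere a (dist x a) ⊆ jBall {a}ᶜ x r := by
  have : Nontrivial E := nontrivial_of_ne x a hx
  intro w hw
  rw [mem_sphere] at hw
  have hd : 0 < dist x a := dist_pos.mpr hx
  have hxw : dist x w / dist x a ≤ 2 := by
    rw [div_le_iff₀ hd]
    linarith [dist_triangle_right x w a]
  refine ⟨fun hwa : w = a => hd.ne' (by rwa [hwa, dist_self, eq_comm] at hw), ?_⟩
  calc jDist {a}ᶜ x w = Real.log (1 + dist x w / dist x a) := by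
        rw [jDist, infDist_frontier_compl_singleton, infDist_frontier_compl_singleton, hw,
          min_self]
    _ ≤ Real.log 3 := Real.log_le_log (by positivity) (by linarith)
    _ < r := hr

end NormedSpace

theorem jBall_not_closeToConvex_of_puncturedSpace_of_log_three_lt_general {n : ℕ}
    (x : EuclideanSpace ℝ (Fin n)) (hx : x ≠ 0)
    (r : ℝ) (hr : Real.log 3 < r) :
    ¬ CloseToConvex (jBall ({0}ᶜ : Set (EuclideanSpace ℝ (Fin n))) x r) := fun hG => by
  obtain ⟨w, hw, hwG⟩ :=
    hG.exists_mem_sphere_not_mem (p := 0) (fun h => h.1 rfl) (dist_nonneg (x := x))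
  exact hwG (sphere_subset_jBall_compl_singleton hx hr hw)

/-- Klén, Remark 2.2: in the punctured space `G = ℝⁿ \ {0}`, `n ≥ 2`, for `x ∈ G` and
`r > log 3` the `j`-metric ball `B_j(x,r)` is not close-to-convex. -/
theorem jBall_not_closeToConvex_of_puncturedSpace_of_log_three_lt {n : ℕ} (hn : 2 ≤ n)
    (x : EuclideanSpace ℝ (Fin n)) (hx : x ≠ 0)
    (r : ℝ) (hr : Real.log 3 < r) :
    ¬ CloseToConvex (jBall ({0}ᶜ : Set (EuclideanSpace ℝ (Fin n))) x r) :=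
  jBall_not_closeToConvex_of_puncturedSpace_of_log_three_lt_general x hx r hr
end

section
/- The function f(z) = cos√(z²−1) + √(z²−1)·sin√(z²−1) has exactly one zero on the open interval (2,π); i.e., there exists a unique λ ∈ (2,π) with f(λ) = 0. -/
/-!
Write `f = g ∘ s` with `g u = cos u + u sin u` and `s z = √(z² - 1)`. Since `g' u = u cos u`,
`g` is strictly decreasing on `[π/2, 3π/2]`, while `s` is strictly increasing and maps `[2, π]`
into `[√3, π] ⊆ [π/2, 3π/2]`; so `f` is strictly decreasing on `[2, π]`. Finally
`f 2 = g (π/2 + t) > 0` with `t = √3 - π/2 ∈ [0, 1/2]`, and `f π = g (π - s) < 0` with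
`s = π - √(π² - 1) ∈ [0, 1/4]`, so the intermediate value theorem gives the zero.
-/

open Real Set

noncomputable def cosAddMulSin (u : ℝ) : ℝ := cos u + u * sin u

lemma hasDerivAt_cosAddMulSin (u : ℝ) : HasDerivAt cosAddMulSin (u * cos u) u := by
  have h := (hasDerivAt_cos u).add ((hasDerivAt_id u).mul (hasDerivAt_sin u))
  exact h.congr_deriv (by simp only [id]; ring)

lemma continuous_cosAddMulSin : Continuous cosAddMulSin := by
  unfold cosAddMulSin; fun_prop

lemma strictAntiOn_cosAddMulSin : StrictAntiOn cosAddMulSin (Icc (π / 2) (3 * π / 2)) := by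
  refine strictAntiOn_of_deriv_neg (convex_Icc _ _) continuous_cosAddMulSin.continuousOn ?_
  intro u hu
  rw [interior_Icc] at hu
  rw [(hasDerivAt_cosAddMulSin u).deriv]
  have hcos : cos u < 0 := cos_neg_of_pi_div_two_lt_of_lt hu.1 (by linarith [hu.2])
  exact mul_neg_of_pos_of_neg (by linarith [hu.1, pi_pos]) hcos

lemma cosAddMulSin_pi_div_two_add_pos {t : ℝ} (ht₀ : 0 ≤ t) (ht₁ : t ≤ 1 / 2) :
    0 < cosAddMulSin (π / 2 + t) := by
  have hsin : sin t ≤ t := sin_le ht₀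
  have hcos : 1 - t ^ 2 / 2 ≤ cos t := one_sub_sq_div_two_le_cos
  have hcos₀ : 0 ≤ cos t := by nlinarith
  have hmul : π / 2 * cos t ≤ (π / 2 + t) * cos t := by nlinarith
  rw [cosAddMulSin, add_comm (π / 2) t, cos_add_pi_div_two, sin_add_pi_div_two]
  nlinarith [pi_gt_three]

lemma cosAddMulSin_pi_sub_neg {s : ℝ} (hs₀ : 0 ≤ s) (hs₁ : s ≤ 1 / 4) :
    cosAddMulSin (π - s) < 0 := by
  have hsin : sin s ≤ s := sin_le hs₀
  have hsin₀ : 0 ≤ sin s := sin_nonneg_of_nonneg_of_le_pi hs₀ (by linarith [pi_gt_three])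
  have hmul : (π - s) * sin s ≤ π * s := by nlinarith [pi_gt_three]
  have hcos : 1 - s ^ 2 / 2 ≤ cos s := one_sub_sq_div_two_le_cos
  rw [cosAddMulSin, cos_pi_sub, sin_pi_sub]
  nlinarith [pi_lt_four]

lemma pi_div_two_le_sqrt_three : π / 2 ≤ √3 :=
  (le_sqrt (by positivity) (by norm_num)).2 (by nlinarith [pi_lt_d2, pi_pos])

lemma cosAddMulSin_sqrt_three_pos : 0 < cosAddMulSin √3 := by
  have hsqrt : √3 ≤ 2 := (sqrt_le_left zero_le_two).2 (by norm_num)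
  simpa using cosAddMulSin_pi_div_two_add_pos (t := √3 - π / 2)
    (by linarith [pi_div_two_le_sqrt_three]) (by linarith [pi_gt_three])

lemma cosAddMulSin_sqrt_pi_sq_sub_one_neg : cosAddMulSin √(π ^ 2 - 1) < 0 := by
  have hle : √(π ^ 2 - 1) ≤ π := (sqrt_le_left pi_pos.le).2 (by linarith)
  have hge : π - 1 / 4 ≤ √(π ^ 2 - 1) :=
    (le_sqrt (by linarith [pi_gt_three]) (by nlinarith [pi_gt_three])).2
      (by nlinarith [pi_gt_three])
  simpa using cosAddMulSin_pi_sub_neg (s := π - √(π ^ 2 - 1)) (by linarith) (by linarith)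

lemma strictMonoOn_sqrt_sq_sub_one : StrictMonoOn (fun z : ℝ => √(z ^ 2 - 1)) (Ici 1) := by
  intro x hx y _ hxy
  have hx : (1 : ℝ) ≤ x := hx
  exact sqrt_lt_sqrt (by nlinarith) (by nlinarith)

lemma mapsTo_sqrt_sq_sub_one :
    MapsTo (fun z : ℝ => √(z ^ 2 - 1)) (Icc 2 π) (Icc (π / 2) (3 * π / 2)) := by
  rintro z ⟨hz₂, hzπ⟩
  constructor
  · exact pi_div_two_le_sqrt_three.trans (sqrt_le_sqrt (by nlinarith))
  · rw [sqrt_le_left (by positivity)]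
    nlinarith [pi_pos]

/-- Klén, Proposition 3.1: the function `f(z) = cos √(z²-1) + √(z²-1) sin √(z²-1)` has
exactly one zero on `(2, π)`. -/
theorem existsUnique_zero_lambda :
    ∃! z : ℝ, z ∈ Set.Ioo 2 Real.pi ∧
      Real.cos (Real.sqrt (z ^ 2 - 1))
        + Real.sqrt (z ^ 2 - 1) * Real.sin (Real.sqrt (z ^ 2 - 1)) = 0 := by
  set f : ℝ → ℝ := cosAddMulSin ∘ fun z => √(z ^ 2 - 1)
  have hanti : StrictAntiOn f (Icc 2 π) :=
    strictAntiOn_cosAddMulSin.comp_strictMonoOn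
      (strictMonoOn_sqrt_sq_sub_one.mono (Icc_subset_Ici_self.trans (Ici_subset_Ici.2 one_le_two)))
      mapsTo_sqrt_sq_sub_one
  have hcont : ContinuousOn f (Icc 2 π) :=
    (continuous_cosAddMulSin.comp (by fun_prop)).continuousOn
  have hf2 : 0 < f 2 := by
    norm_num [f]
    exact cosAddMulSin_sqrt_three_pos
  have hfπ : f π < 0 := cosAddMulSin_sqrt_pi_sq_sub_one_neg
  obtain ⟨z, hz, hfz⟩ := intermediate_value_Ioo' (by linarith [pi_gt_three]) hcont ⟨hfπ, hf2⟩
  exact ⟨z, ⟨hz, hfz⟩, fun y ⟨hy, hfy⟩ =>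
    hanti.injOn (Ioo_subset_Icc_self hy) (Ioo_subset_Icc_self hz) (hfy.trans hfz.symm)⟩
end

section
/- For every r with log(1+√2) < r ≤ log(1+√3) one has ((eʳ−1)²·(e^{2r}−2eʳ+2))/(e^{2r}(eʳ−2)²) ≥ 3 ≥ (eʳ−1)²; moreover eʳ−1+1/(1−eʳ) ≤ √2 for all such r. -/
/-! With `x = eʳ` and `t = (x - 1)²`, the hypothesis on `r` reads `2 < t ≤ 3`. Since
`x² - 2x + 2 = t + 1` and `x (x - 2) = t - 1`, the quotient equals `t (t + 1) / (t - 1)²`, and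
`3 ≤ t (t + 1) / (t - 1)²` is `(2t - 1)(t - 3) ≤ 0`. With `s = x - 1 ∈ (0, √3]`, the last
inequality is `s - s⁻¹ ≤ √2`, i.e. `s² - 1 ≤ √2 s`. -/

open Real

theorem three_le_mul_add_one_div_sub_one_sq {t : ℝ} (ht : 1 / 2 ≤ t) (ht1 : t ≠ 1) (ht3 : t ≤ 3) :
    3 ≤ t * (t + 1) / (t - 1) ^ 2 := by
  rw [le_div_iff₀ (pow_pos (abs_pos.2 (sub_ne_zero.2 ht1)) 2 |>.trans_eq (sq_abs _))]
  nlinarith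

theorem sub_inv_le_sqrt_two {s : ℝ} (hs : 0 < s) (hs3 : s ≤ √3) : s - s⁻¹ ≤ √2 := by
  have hs_sq : s ^ 2 ≤ 3 := (le_sqrt hs.le (by norm_num)).1 hs3
  have h2 : √2 ^ 2 = 2 := sq_sqrt (by norm_num)
  have key : s ^ 2 - 1 ≤ √2 * s := by
    nlinarith [sqrt_nonneg 2, mul_pos hs (sqrt_pos.2 (by norm_num : (0:ℝ) < 2))]
  calc s - s⁻¹ = (s ^ 2 - 1) / s := by field_simp
    _ ≤ √2 := by rwa [div_le_iff₀ hs]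

/-- Klén, proof of Theorem 2.4: for `log (1+√2) < r ≤ log (1+√3)` one has
`((eʳ-1)²(e^{2r}-2eʳ+2))/(e^{2r}(eʳ-2)²) ≥ 3 ≥ (eʳ-1)²` and `eʳ-1+1/(1-eʳ) ≤ √2`. -/
theorem jball_general_domain_inequalities (r : ℝ)
    (h₁ : Real.log (1 + Real.sqrt 2) < r) (h₂ : r ≤ Real.log (1 + Real.sqrt 3)) :
    (3 ≤ ((Real.exp r - 1) ^ 2 * (Real.exp (2 * r) - 2 * Real.exp r + 2))
          / (Real.exp (2 * r) * (Real.exp r - 2) ^ 2)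
        ∧ (Real.exp r - 1) ^ 2 ≤ 3)
      ∧ Real.exp r - 1 + 1 / (1 - Real.exp r) ≤ Real.sqrt 2 := by
  set x := exp r
  have hx_lower : √2 < x - 1 := by
    linarith [(log_lt_iff_lt_exp (by positivity)).1 h₁]
  have hx_upper : x - 1 ≤ √3 := by
    linarith [(le_log_iff_exp_le (by positivity)).1 h₂]
  have hs : 0 < x - 1 := (sqrt_nonneg 2).trans_lt hx_lower
  have ht_lower : 2 < (x - 1) ^ 2 := (sqrt_lt' hs).1 hx_lower
  have ht_upper : (x - 1) ^ 2 ≤ 3 := (le_sqrt hs.le (by norm_num)).1 hx_upper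
  have h_exp_two_mul : exp (2 * r) = x ^ 2 := by rw [two_mul, exp_add, sq]
  refine ⟨⟨?_, ht_upper⟩, ?_⟩
  · calc (3 : ℝ) ≤ (x - 1) ^ 2 * ((x - 1) ^ 2 + 1) / ((x - 1) ^ 2 - 1) ^ 2 :=
          three_le_mul_add_one_div_sub_one_sq (by linarith) (by linarith) ht_upper
      _ = _ := by rw [h_exp_two_mul]; ring
  · calc x - 1 + 1 / (1 - x) = (x - 1) - (x - 1)⁻¹ := by rw [one_div, ← neg_sub, inv_neg]; ring
      _ ≤ √2 := sub_inv_le_sqrt_two hs hx_upper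
end

section
/- Let G = ℝ² \ {0}, let x ∈ G and let 0 < r ≤ λ. Then the quasihyperbolic disk B_k(x,r) is close-to-convex. -/
/-- The quasihyperbolic metric of the punctured space `ℝⁿ \ {0}` (Martin–Osgood formula):
`k(x,y) = √(α² + log²(|x|/|y|))` where `α ∈ [0,π]` is the angle between `[x,0]` and `[0,y]`. -/
noncomputable def qhDist {E : Type*} [NormedAddCommGroup E] [InnerProductSpace ℝ E]
    (x y : E) : ℝ :=
  Real.sqrt ((InnerProductGeometry.angle x y) ^ 2 + (Real.log (‖x‖ / ‖y‖)) ^ 2)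

/-- The quasihyperbolic ball `B_k(x,r) = {y ∈ ℝⁿ \ {0} : k(x,y) < r}` of the punctured space. -/
def kBall {E : Type*} [NormedAddCommGroup E] [InnerProductSpace ℝ E] (x : E) (r : ℝ) : Set E :=
  {y | y ≠ 0 ∧ qhDist x y < r}

/-!
Write points as `u + s • x` with `u ⟂ x`. The quasihyperbolic distance from `x` depends only on
`s` and `h = ‖u‖ / ‖x‖`: it is the distance `√(qhDistSq h s)` from `(1, 0)` to `(s, h)` in the
punctured plane. So every line parallel to `x` meets `B_k(x, r)` in a translate of the bounded set
`qhChord h r`, and the complement of the ball is, line by line, the union of the two rays on either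
side of the chord, provided the chord is an interval.

If a sublevel set `{qhDistSq h < s}` with `s ≤ λ²` were not an interval, the coercive function
`qhDistSq h` would have two local minima below `λ²`. At a critical point below `λ²` the point lies
in the right half-plane outside the unit circle: this is where `θ + λ cos θ ≥ 0` on `[π/2, π]`,
i.e. the choice of `λ`, enters. There the numerator `log R · s - θ h` of the derivative is strictly
increasing, so it cannot vanish twice.
-/

open Set Function Filter Real

section HalfLines

variable {E : Type*} [AddCommGroup E] [Module ℝ E]

lemma isHalfLine_image_Ioi (w : E) {v : E} (hv : v ≠ 0) (a : ℝ) :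
    IsHalfLine ((fun t : ℝ => w + t • v) '' Ioi a) := by
  refine ⟨w + a • v, v, hv, Or.inl ?_⟩
  ext y
  constructor
  · rintro ⟨t, ht, rfl⟩
    exact ⟨t - a, sub_pos.2 ht, by module⟩
  · rintro ⟨t, ht, rfl⟩
    exact ⟨a + t, lt_add_of_pos_right a ht, by module⟩

lemma isHalfLine_image_Ici (w : E) {v : E} (hv : v ≠ 0) (a : ℝ) :
    IsHalfLine ((fun t : ℝ => w + t • v) '' Ici a) := by
  refine ⟨w + a • v, v, hv, Or.inr ?_⟩
  ext y
  constructor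
  · rintro ⟨t, ht, rfl⟩
    exact ⟨t - a, sub_nonneg.2 ht, by module⟩
  · rintro ⟨t, ht, rfl⟩
    exact ⟨a + t, le_add_of_nonneg_right ht, by module⟩

lemma image_add_smul_eq_image_neg (w v : E) (s : Set ℝ) :
    (fun t : ℝ => w + t • v) '' s = (fun t : ℝ => w + t • -v) '' (Neg.neg '' s) := by
  rw [image_image]
  simp only [neg_smul_neg]

lemma isHalfLine_image_of_isUpperSet (w : E) {v : E} (hv : v ≠ 0) {s : Set ℝ}
    (hs : IsUpperSet s) (hne : s.Nonempty) (hbdd : BddBelow s) :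
    IsHalfLine ((fun t : ℝ => w + t • v) '' s) := by
  have hIoi : Ioi (sInf s) ⊆ s := fun t ht => by
    obtain ⟨u, hu, hut⟩ := (isGLB_lt_iff (isGLB_csInf hne hbdd)).1 ht
    exact hs hut.le hu
  have := mem_Ici_Ioi_of_subset_of_subset hIoi fun t ht => csInf_le hbdd ht
  simp only [mem_insert_iff, mem_singleton_iff] at this
  rcases this with h | h <;> rw [h]
  exacts [isHalfLine_image_Ici w hv _, isHalfLine_image_Ioi w hv _]

lemma isHalfLine_image_of_isLowerSet (w : E) {v : E} (hv : v ≠ 0) {s : Set ℝ}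
    (hs : IsLowerSet s) (hne : s.Nonempty) (hbdd : BddAbove s) :
    IsHalfLine ((fun t : ℝ => w + t • v) '' s) := by
  have hIio : Iio (sSup s) ⊆ s := fun t ht => by
    obtain ⟨u, hu, hut⟩ := (lt_isLUB_iff (isLUB_csSup hne hbdd)).1 ht
    exact hs hut.le hu
  have := mem_Iic_Iio_of_subset_of_subset hIio fun t ht => le_csSup hbdd ht
  simp only [mem_insert_iff, mem_singleton_iff] at this
  rw [image_add_smul_eq_image_neg]
  rcases this with h | h <;> rw [h]
  · rw [image_neg_Iic]; exact isHalfLine_image_Ici w (neg_ne_zero.2 hv) _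
  · rw [image_neg_Iio]; exact isHalfLine_image_Ioi w (neg_ne_zero.2 hv) _

end HalfLines

section ComplementPieces

variable {S : Set ℝ}

-- Splitting at `sInf S` also covers `S = ∅`, where `sInf ∅ = 0`.
def complPiece (S : Set ℝ) : Bool → Set ℝ
  | false => {t | t ∉ S ∧ t ≤ sInf S}
  | true => {t | t ∉ S ∧ sInf S < t}

lemma iUnion_complPiece (S : Set ℝ) : ⋃ b, complPiece S b = Sᶜ := by
  ext t
  simp only [mem_iUnion, Bool.exists_bool, complPiece, mem_compl_iff]
  constructor
  · rintro (h | h) <;> exact h.1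
  · intro ht
    exact (le_or_gt t (sInf S)).imp (⟨ht, ·⟩) (⟨ht, ·⟩)

lemma pairwise_disjoint_complPiece (S : Set ℝ) : Pairwise (Disjoint on complPiece S) := by
  rintro (_ | _) (_ | _) hne
  · exact absurd rfl hne
  · exact disjoint_left.2 fun t h h' => not_lt_of_ge h.2 h'.2
  · exact disjoint_left.2 fun t h h' => not_lt_of_ge h'.2 h.2
  · exact absurd rfl hne

lemma isLowerSet_complPiece_false (hS : BddBelow S) : IsLowerSet (complPiece S false) := by
  rintro t t' htt' ⟨htS, hta⟩
  refine ⟨fun ht'S => htS ?_, htt'.trans hta⟩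
  rwa [le_antisymm (hta.trans (csInf_le hS ht'S)) htt']

lemma isUpperSet_complPiece_true (hS : S.OrdConnected) : IsUpperSet (complPiece S true) := by
  rintro t t' htt' ⟨htS, hat⟩
  refine ⟨fun ht'S => htS ?_, hat.trans_le htt'⟩
  obtain ⟨u, huS, hut⟩ := exists_lt_of_csInf_lt ⟨t', ht'S⟩ hat
  exact hS.out huS ht'S ⟨hut.le, htt'⟩

lemma isHalfLine_image_complPiece {E : Type*} [AddCommGroup E] [Module ℝ E] (w : E) {v : E}
    (hv : v ≠ 0) (hSb : Bornology.IsBounded S) (hSc : S.OrdConnected) (b : Bool) :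
    IsHalfLine ((fun t : ℝ => w + t • v) '' complPiece S b) := by
  rw [isBounded_iff_bddBelow_bddAbove] at hSb
  cases b
  · refine isHalfLine_image_of_isLowerSet w hv (isLowerSet_complPiece_false hSb.1)
      ⟨sInf S - 1, fun h => ?_, by linarith⟩ ⟨sInf S, fun t ht => ht.2⟩
    linarith [csInf_le hSb.1 h]
  · obtain ⟨M, hM⟩ := hSb.2
    refine isHalfLine_image_of_isUpperSet w hv (isUpperSet_complPiece_true hSc)
      ⟨max M (sInf S) + 1, fun h => ?_, by linarith [le_max_right M (sInf S)]⟩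
      ⟨sInf S, fun t ht => ht.2.le⟩
    linarith [hM h, le_max_left M (sInf S)]

end ComplementPieces

theorem closeToConvex_of_sections {E : Type*} [AddCommGroup E] [Module ℝ E] {G : Set E}
    {v : E} (hv : v ≠ 0) (hbdd : ∀ w, Bornology.IsBounded {t : ℝ | w + t • v ∈ G})
    (hconn : ∀ w, {t : ℝ | w + t • v ∈ G}.OrdConnected) : CloseToConvex G := by
  let mk := Submodule.Quotient.mk (p := ℝ ∙ v)
  have mk_line (w : E) (t : ℝ) : mk (w + t • v) = mk w :=
    (Submodule.Quotient.eq _).2 <| by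
      simpa using Submodule.smul_mem _ t (Submodule.mem_span_singleton_self v)
  -- each line is parametrised from one representative of its class, so that its two pieces do
  -- not depend on the point the line was reached from
  let base := surjInv (Submodule.Quotient.mk_surjective (ℝ ∙ v))
  have mk_base : ∀ c, mk (base c) = c :=
    surjInv_eq (Submodule.Quotient.mk_surjective (ℝ ∙ v))
  let piece : (E ⧸ ℝ ∙ v) × Bool → Set E := fun cb =>
    (fun t : ℝ => base cb.1 + t • v) '' complPiece {t | base cb.1 + t • v ∈ G} cb.2
  refine ⟨range piece, forall_mem_range.2 fun cb => ?_, Pairwise.range_pairwise ?_, ?_⟩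
  · exact isHalfLine_image_complPiece _ hv (hbdd _) (hconn _) _
  · rintro ⟨c, b⟩ ⟨c', b'⟩ hne
    refine disjoint_left.2 ?_
    rintro _ ⟨t, ht, rfl⟩ ⟨t', ht', heq⟩
    have hc : c' = c := by
      simpa only [mk_line, mk_base] using congrArg mk heq
    subst hc
    have hb : b ≠ b' := fun h => hne (by rw [h])
    have htt : t' = t := smul_left_injective ℝ hv (add_left_cancel heq)
    subst htt
    exact disjoint_left.1 (pairwise_disjoint_complPiece _ hb) ht ht'
  · ext y
    simp only [sUnion_range, mem_iUnion, mem_compl_iff]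
    constructor
    · rintro ⟨⟨c, b⟩, t, ht, rfl⟩
      exact ((iUnion_complPiece _).subset (mem_iUnion_of_mem b ht) :)
    · intro hy
      obtain ⟨t, ht⟩ := Submodule.mem_span_singleton.1
        ((Submodule.Quotient.eq _).1 (mk_base (mk y)).symm)
      have hyt : base (mk y) + t • v = y := by rw [ht]; abel
      have htS : t ∈ {t | base (mk y) + t • v ∈ G}ᶜ := by simpa [hyt] using hy
      rw [← iUnion_complPiece, mem_iUnion] at htS
      obtain ⟨b, hb⟩ := htS
      exact ⟨(mk y, b), t, hb, hyt⟩

lemma exists_add_mul_cos_eq_zero {lam : ℝ} (hlam : lam ∈ Ioo 2 π)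
    (hlam0 : cos √(lam ^ 2 - 1) + √(lam ^ 2 - 1) * sin √(lam ^ 2 - 1) = 0) :
    ∃ a ∈ Icc (π / 2) π, lam * sin a = 1 ∧ a + lam * cos a = 0 := by
  obtain ⟨hlam2, hlamπ⟩ := hlam
  set a := √(lam ^ 2 - 1)
  have ha2 : a ^ 2 = lam ^ 2 - 1 := sq_sqrt (by nlinarith)
  have ha0 : 0 < a := sqrt_pos.2 (by nlinarith)
  have haπ : a < π := by nlinarith [pi_pos]
  have hsin_pos : 0 < sin a := sin_pos_of_pos_of_lt_pi ha0 haπ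
  have hcos : cos a = -(a * sin a) := by linarith
  -- `sin² a (1 + a²) = 1` and `1 + a² = λ²`
  have hsin : lam * sin a = 1 := by
    have : (lam * sin a) ^ 2 = 1 := by
      linear_combination (-sin a ^ 2) * ha2 - (cos a - a * sin a) * hcos + sin_sq_add_cos_sq a
    nlinarith [mul_pos (by linarith : (0:ℝ) < lam) hsin_pos]
  have hπa : π / 2 ≤ a := by
    by_contra! h
    nlinarith [cos_nonneg_of_mem_Icc ⟨by linarith, h.le⟩]
  exact ⟨a, ⟨hπa, haπ.le⟩, hsin, by rw [hcos]; linear_combination (-a) * hsin⟩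

lemma isMinOn_add_mul_cos {lam a : ℝ} (ha : a ∈ Icc (π / 2) π) (hsin : lam * sin a = 1) :
    IsMinOn (fun θ => θ + lam * cos θ) (Icc (π / 2) π) a := by
  have hlam : 0 < lam := by
    nlinarith [sin_nonneg_of_nonneg_of_le_pi (by linarith [pi_pos, ha.1]) ha.2]
  have hg (θ : ℝ) : HasDerivAt (fun θ => θ + lam * cos θ) (1 - lam * sin θ) θ :=
    ((hasDerivAt_id' θ).add ((hasDerivAt_cos θ).const_mul lam)).congr_deriv (by ring)
  have hgc : ContinuousOn (fun θ => θ + lam * cos θ) univ := by fun_prop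
  have hgd : DifferentiableOn ℝ (fun θ => θ + lam * cos θ) univ :=
    fun θ _ => (hg θ).differentiableAt.differentiableWithinAt
  have hsin_le {θ θ' : ℝ} (h : π / 2 ≤ θ) (h' : θ ≤ θ') (hπ : θ' ≤ π) : sin θ' ≤ sin θ := by
    rw [← sin_pi_sub θ, ← sin_pi_sub θ']
    exact sin_le_sin_of_le_of_le_pi_div_two (by linarith [pi_pos]) (by linarith) (by linarith)
  rintro θ ⟨hθ1, hθ2⟩
  rcases le_total θ a with hθa | haθ
  · refine antitoneOn_of_deriv_nonpos (convex_Icc (π / 2) a) (hgc.mono (subset_univ _))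
      (hgd.mono (subset_univ _)) (fun x hx => ?_) ⟨hθ1, hθa⟩ ⟨ha.1, le_rfl⟩ hθa
    rw [interior_Icc] at hx
    rw [(hg x).deriv]
    nlinarith [hsin_le hx.1.le hx.2.le ha.2]
  · refine monotoneOn_of_deriv_nonneg (convex_Icc a π) (hgc.mono (subset_univ _))
      (hgd.mono (subset_univ _)) (fun x hx => ?_) ⟨le_rfl, ha.2⟩ ⟨haθ, hθ2⟩ haθ
    rw [interior_Icc] at hx
    rw [(hg x).deriv]
    nlinarith [hsin_le ha.1 hx.1.le hx.2.le]

-- `qhRadius h p` and `qhAngle h p` are polar coordinates of the point `(p, h)`, `h ≥ 0`, so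
-- `qhDistSq h p` is the squared quasihyperbolic distance from `(1, 0)` to `(p, h)` in `ℝ² \ {0}`.
noncomputable def qhRadius (h p : ℝ) : ℝ := √(p ^ 2 + h ^ 2)

noncomputable def qhAngle (h p : ℝ) : ℝ := arccos (p / qhRadius h p)

noncomputable def qhDistSq (h p : ℝ) : ℝ := qhAngle h p ^ 2 + log (qhRadius h p) ^ 2

noncomputable def qhDerivNum (h p : ℝ) : ℝ := log (qhRadius h p) * p - qhAngle h p * h

section PolarCoordinates

variable {h : ℝ}

lemma sq_qhRadius (h p : ℝ) : qhRadius h p ^ 2 = p ^ 2 + h ^ 2 :=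
  sq_sqrt (by positivity)

lemma qhRadius_pos (hh : 0 < h) (p : ℝ) : 0 < qhRadius h p :=
  sqrt_pos.2 (by positivity)

lemma abs_le_qhRadius (h p : ℝ) : |p| ≤ qhRadius h p :=
  abs_le_sqrt (le_add_of_nonneg_right (sq_nonneg h))

lemma abs_div_qhRadius_lt_one (hh : 0 < h) (p : ℝ) : |p / qhRadius h p| < 1 := by
  have hR := qhRadius_pos hh p
  rw [abs_div, abs_of_pos hR, div_lt_one hR, ← sqrt_sq_eq_abs]
  exact sqrt_lt_sqrt (sq_nonneg p) (lt_add_of_pos_right _ (pow_pos hh 2))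

lemma cos_qhAngle (hh : 0 < h) (p : ℝ) : cos (qhAngle h p) = p / qhRadius h p :=
  cos_arccos (abs_le.1 (abs_div_qhRadius_lt_one hh p).le).1
    (abs_le.1 (abs_div_qhRadius_lt_one hh p).le).2

lemma sqrt_one_sub_div_qhRadius_sq (hh : 0 < h) (p : ℝ) :
    √(1 - (p / qhRadius h p) ^ 2) = h / qhRadius h p := by
  have hR := qhRadius_pos hh p
  rw [← sqrt_sq (div_pos hh hR).le]
  congr 1
  field_simp
  rw [sq_qhRadius]
  ring

lemma sin_qhAngle (hh : 0 < h) (p : ℝ) : sin (qhAngle h p) = h / qhRadius h p := by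
  rw [qhAngle, sin_arccos, sqrt_one_sub_div_qhRadius_sq hh]

lemma qhAngle_pos (hh : 0 < h) (p : ℝ) : 0 < qhAngle h p :=
  arccos_pos.2 (abs_lt.1 (abs_div_qhRadius_lt_one hh p)).2

lemma hasDerivAt_qhRadius (hh : 0 < h) (p : ℝ) :
    HasDerivAt (qhRadius h) (p / qhRadius h p) p := by
  have := (((hasDerivAt_pow 2 p).add_const (h ^ 2)).sqrt (by positivity))
  exact this.congr_deriv (by rw [qhRadius]; ring)

lemma hasDerivAt_log_qhRadius (hh : 0 < h) (p : ℝ) :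
    HasDerivAt (fun p => log (qhRadius h p)) (p / qhRadius h p ^ 2) p :=
  ((hasDerivAt_qhRadius hh p).log (qhRadius_pos hh p).ne').congr_deriv (by ring)

lemma hasDerivAt_qhAngle (hh : 0 < h) (p : ℝ) :
    HasDerivAt (qhAngle h) (-(h / qhRadius h p ^ 2)) p := by
  have hR := qhRadius_pos hh p
  have hratio := abs_lt.1 (abs_div_qhRadius_lt_one hh p)
  have hdiv : HasDerivAt (fun p => p / qhRadius h p) (h ^ 2 / qhRadius h p ^ 3) p := by
    refine ((hasDerivAt_id p).div (hasDerivAt_qhRadius hh p) hR.ne').congr_deriv ?_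
    field_simp
    rw [id, sq_qhRadius]
    ring
  refine ((hasDerivAt_arccos hratio.1.ne' hratio.2.ne).comp p hdiv).congr_deriv ?_
  rw [sqrt_one_sub_div_qhRadius_sq hh]
  field_simp

lemma hasDerivAt_qhDistSq (hh : 0 < h) (p : ℝ) :
    HasDerivAt (qhDistSq h) (2 * qhDerivNum h p / qhRadius h p ^ 2) p := by
  refine (((hasDerivAt_qhAngle hh p).pow 2).add
    ((hasDerivAt_log_qhRadius hh p).pow 2)).congr_deriv ?_
  rw [qhDerivNum]
  ring

lemma hasDerivAt_qhDerivNum (hh : 0 < h) (p : ℝ) :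
    HasDerivAt (qhDerivNum h) (1 + log (qhRadius h p)) p := by
  refine (((hasDerivAt_log_qhRadius hh p).mul (hasDerivAt_id p)).sub
    ((hasDerivAt_qhAngle hh p).mul_const h)).congr_deriv ?_
  have hR := qhRadius_pos hh p
  field_simp
  rw [id, sq_qhRadius]
  ring

lemma continuous_qhDistSq (hh : 0 < h) : Continuous (qhDistSq h) :=
  continuous_iff_continuousAt.2 fun p => (hasDerivAt_qhDistSq hh p).continuousAt

lemma tendsto_qhDistSq_cocompact (h : ℝ) : Tendsto (qhDistSq h) (cocompact ℝ) atTop := by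
  have hlog : Tendsto (fun p => log (qhRadius h p)) (cocompact ℝ) atTop :=
    tendsto_log_atTop.comp <| tendsto_atTop_mono (abs_le_qhRadius h) <| by
      rw [cocompact_eq_atBot_atTop]
      exact tendsto_abs_atBot_atTop.sup tendsto_abs_atTop_atTop
  exact tendsto_atTop_mono (fun p => le_add_of_nonneg_left (sq_nonneg _))
    ((tendsto_pow_atTop two_ne_zero).comp hlog)

end PolarCoordinates

section CoerciveMinima

variable {f : ℝ → ℝ}

lemma exists_isLocalMin_lt_of_le (hf : Continuous f) (hcoer : Tendsto f (cocompact ℝ) atTop)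
    {a b : ℝ} (hab : a ≤ b) (hfab : f a < f b) :
    ∃ c < b, IsLocalMin f c ∧ f c ≤ f a := by
  obtain ⟨c, hc, hmin⟩ := hf.continuousOn.exists_isMinOn' isClosed_Iic (mem_Iic.2 hab)
    ((hcoer.eventually_ge_atTop (f a)).filter_mono inf_le_left)
  have hcb : c < b := lt_of_le_of_ne hc fun hcb => (hmin (mem_Iic.2 hab)).not_gt (hcb ▸ hfab)
  exact ⟨c, hcb, hmin.isLocalMin (Iic_mem_nhds hcb), hmin (mem_Iic.2 hab)⟩

lemma exists_isLocalMin_gt_of_le (hf : Continuous f) (hcoer : Tendsto f (cocompact ℝ) atTop)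
    {a b : ℝ} (hba : b ≤ a) (hfab : f a < f b) :
    ∃ c > b, IsLocalMin f c ∧ f c ≤ f a := by
  obtain ⟨c, hc, hmin⟩ := hf.continuousOn.exists_isMinOn' isClosed_Ici (mem_Ici.2 hba)
    ((hcoer.eventually_ge_atTop (f a)).filter_mono inf_le_left)
  have hbc : b < c := lt_of_le_of_ne hc fun hbc => (hmin (mem_Ici.2 hba)).not_gt (hbc ▸ hfab)
  exact ⟨c, hbc, hmin.isLocalMin (Ici_mem_nhds hbc), hmin (mem_Ici.2 hba)⟩

end CoerciveMinima

section CriticalPoints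

variable {lam h : ℝ}

lemma pos_of_qhDerivNum_eq_zero (hlam : 0 ≤ lam)
    (hW : ∀ θ ∈ Icc (π / 2) π, 0 ≤ θ + lam * cos θ) (hh : 0 < h) {c : ℝ}
    (hc : qhDerivNum h c = 0) (hF : qhDistSq h c < lam ^ 2) :
    0 < c ∧ 0 < log (qhRadius h c) := by
  set θ := qhAngle h c
  set u := log (qhRadius h c)
  have hR := qhRadius_pos hh c
  have hθ0 : 0 < θ := qhAngle_pos hh c
  have hθπ : θ ≤ π := arccos_le_pi _
  have hcrit : u * c = θ * h := by rw [qhDerivNum] at hc; linarith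
  have hc0 : 0 < c := by
    by_contra! hc0
    have hcos : cos θ ≤ 0 := by rw [cos_qhAngle hh]; exact div_nonpos_of_nonpos_of_nonneg hc0 hR.le
    have hθ2 : π / 2 ≤ θ := by
      by_contra! h2
      exact (cos_pos_of_mem_Ioo ⟨by linarith [pi_pos], h2⟩).not_ge hcos
    -- dividing `hcrit` by the radius gives `u cos θ = θ sin θ`, hence `qhDistSq h c * cos² θ = θ²`
    have hrel : u * cos θ = θ * sin θ := by
      rw [cos_qhAngle hh, sin_qhAngle hh]
      field_simp
      exact hcrit
    have hFcos : qhDistSq h c * cos θ ^ 2 = θ ^ 2 := by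
      rw [qhDistSq]
      linear_combination (u * cos θ + θ * sin θ) * hrel + θ ^ 2 * sin_sq_add_cos_sq θ
    have hlamcos : (lam * -cos θ) ^ 2 ≤ θ ^ 2 :=
      pow_le_pow_left₀ (mul_nonneg hlam (neg_nonneg.2 hcos)) (by linarith [hW θ ⟨hθ2, hθπ⟩]) 2
    have hcos2 : 0 < cos θ ^ 2 := by
      refine lt_of_le_of_ne (sq_nonneg _) fun h0 => ?_
      rw [← h0, mul_zero] at hFcos
      exact hθ0.ne' (pow_eq_zero_iff two_ne_zero |>.1 hFcos.symm)
    nlinarith [mul_lt_mul_of_pos_right hF hcos2]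
  exact ⟨hc0, pos_of_mul_pos_left (hcrit ▸ mul_pos hθ0 hh) hc0.le⟩

lemma qhDerivNum_lt_of_lt (hh : 0 < h) {c₁ c₂ : ℝ} (hc₁ : 0 < c₁)
    (hu : 0 < log (qhRadius h c₁)) (h12 : c₁ < c₂) : qhDerivNum h c₁ < qhDerivNum h c₂ := by
  refine strictMonoOn_of_deriv_pos (convex_Icc c₁ c₂)
    (fun p _ => (hasDerivAt_qhDerivNum hh p).continuousAt.continuousWithinAt) (fun p hp => ?_)
    ⟨le_rfl, h12.le⟩ ⟨h12.le, le_rfl⟩ h12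
  rw [interior_Icc] at hp
  rw [(hasDerivAt_qhDerivNum hh p).deriv]
  have : log (qhRadius h c₁) ≤ log (qhRadius h p) :=
    log_le_log (qhRadius_pos hh c₁) (sqrt_le_sqrt (by nlinarith [hp.1]))
  linarith

lemma ordConnected_setOf_qhDistSq_lt (hlam : 0 ≤ lam)
    (hW : ∀ θ ∈ Icc (π / 2) π, 0 ≤ θ + lam * cos θ) (hh : 0 < h) {s : ℝ} (hs : s ≤ lam ^ 2) :
    {p | qhDistSq h p < s}.OrdConnected := by
  refine ⟨fun p₁ (hp₁ : qhDistSq h p₁ < s) p₃ (hp₃ : qhDistSq h p₃ < s) p₂ ⟨h12, h23⟩ => ?_⟩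
  show qhDistSq h p₂ < s
  by_contra! hp₂
  have hcont := continuous_qhDistSq hh
  have hcoer := tendsto_qhDistSq_cocompact h
  obtain ⟨c₁, hc₁, hmin₁, hF₁⟩ := exists_isLocalMin_lt_of_le hcont hcoer h12 (by linarith)
  obtain ⟨c₂, hc₂, hmin₂, -⟩ := exists_isLocalMin_gt_of_le hcont hcoer h23 (by linarith)
  have hcrit {c : ℝ} (hc : IsLocalMin (qhDistSq h) c) : qhDerivNum h c = 0 := by
    have := hc.hasDerivAt_eq_zero (hasDerivAt_qhDistSq hh c)
    simpa [(qhRadius_pos hh c).ne'] using this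
  obtain ⟨hc₁0, hu⟩ := pos_of_qhDerivNum_eq_zero hlam hW hh (hcrit hmin₁) (by linarith)
  exact (qhDerivNum_lt_of_lt hh hc₁0 hu (hc₁.trans hc₂)).ne
    ((hcrit hmin₁).trans (hcrit hmin₂).symm)

end CriticalPoints

def qhChord (h r : ℝ) : Set ℝ := {p | qhRadius h p ≠ 0 ∧ √(qhDistSq h p) < r}

lemma isBounded_qhChord (h r : ℝ) : Bornology.IsBounded (qhChord h r) := by
  refine (Metric.isBounded_Icc (-exp r) (exp r)).subset fun p ⟨hR0, hF⟩ => abs_le.1 ?_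
  have hR : 0 < qhRadius h p := lt_of_le_of_ne (sqrt_nonneg _) (Ne.symm hR0)
  have hlog : log (qhRadius h p) < r :=
    (le_abs_self _).trans_lt ((abs_le_sqrt (le_add_of_nonneg_left (sq_nonneg _))).trans_lt hF)
  exact (abs_le_qhRadius h p).trans ((log_lt_iff_lt_exp hR).1 hlog).le

lemma qhChord_zero {r : ℝ} (hr : r ≤ π) : qhChord 0 r = Ioo (exp (-r)) (exp r) := by
  have hR (p : ℝ) : qhRadius 0 p = |p| := by simp [qhRadius, sqrt_sq_eq_abs]
  ext p
  simp only [qhChord, qhDistSq, qhAngle, hR, mem_Ioo, mem_ofPred_eq]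
  rcases lt_trichotomy p 0 with hp | rfl | hp
  · rw [abs_of_neg hp, div_neg, div_self hp.ne, arccos_neg_one]
    refine iff_of_false (fun ⟨_, h⟩ => h.not_ge (hr.trans ?_)) fun h => ?_
    · exact le_sqrt_of_sq_le (le_add_of_nonneg_right (sq_nonneg _))
    · linarith [exp_pos (-r), h.1]
  · simp [(exp_pos _).le]
  · rw [abs_of_pos hp, div_self hp.ne', arccos_one, sq, zero_mul, zero_add, sqrt_sq_eq_abs,
      abs_lt, lt_log_iff_exp_lt hp, log_lt_iff_lt_exp hp]
    exact and_iff_right hp.ne'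

lemma ordConnected_qhChord {lam h r : ℝ} (hlam : 0 ≤ lam)
    (hW : ∀ θ ∈ Icc (π / 2) π, 0 ≤ θ + lam * cos θ) (hh : 0 ≤ h) (hr : r ≤ lam) :
    (qhChord h r).OrdConnected := by
  rcases hh.eq_or_lt with rfl | hh
  · have hlamπ : lam ≤ π := by
      have := hW π ⟨by linarith [pi_pos], le_rfl⟩
      rw [cos_pi] at this
      linarith
    rw [qhChord_zero (hr.trans hlamπ)]
    exact ordConnected_Ioo
  · refine ⟨fun p₁ hp₁ p₃ hp₃ p hp => ?_⟩
    have hr0 : 0 < r := (sqrt_nonneg _).trans_lt hp₁.2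
    simp only [qhChord, mem_ofPred_eq, sqrt_lt' hr0] at hp₁ hp₃ ⊢
    exact ⟨(qhRadius_pos hh p).ne',
      (ordConnected_setOf_qhDistSq_lt hlam hW hh (pow_le_pow_left₀ hr0.le hr 2)).out hp₁.2 hp₃.2 hp⟩

section InnerProductSpace

open scoped RealInnerProductSpace

variable {E : Type*} [NormedAddCommGroup E] [InnerProductSpace ℝ E] {x u : E}

lemma norm_add_smul_eq_mul_qhRadius (hx : x ≠ 0) (hu : ⟪x, u⟫ = 0) (s : ℝ) :
    ‖u + s • x‖ = ‖x‖ * qhRadius (‖u‖ / ‖x‖) s := by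
  have hx' : ‖x‖ ≠ 0 := norm_ne_zero_iff.2 hx
  refine (sq_eq_sq₀ (norm_nonneg _) (mul_nonneg (norm_nonneg _) (sqrt_nonneg _))).1 ?_
  rw [mul_pow, sq_sqrt (by positivity), norm_add_sq_real, real_inner_smul_right,
    real_inner_comm, hu, norm_smul, Real.norm_eq_abs]
  field_simp
  rw [sq_abs]
  ring

lemma qhDist_add_smul (hx : x ≠ 0) (hu : ⟪x, u⟫ = 0) (s : ℝ) :
    qhDist x (u + s • x) = √(qhDistSq (‖u‖ / ‖x‖) s) := by
  have hx' : ‖x‖ ≠ 0 := norm_ne_zero_iff.2 hx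
  have hinner : ⟪x, u + s • x⟫ = ‖x‖ * ‖x‖ * s := by
    rw [inner_add_right, hu, real_inner_smul_right, real_inner_self_eq_norm_mul_norm]
    ring
  rw [qhDist, qhDistSq, qhAngle, InnerProductGeometry.angle, hinner,
    norm_add_smul_eq_mul_qhRadius hx hu, ← mul_assoc, mul_div_mul_left _ _ (mul_ne_zero hx' hx'),
    div_mul_cancel_left₀ hx', log_inv, neg_sq]

lemma add_smul_mem_kBall_iff (hx : x ≠ 0) (hu : ⟪x, u⟫ = 0) (s r : ℝ) :
    u + s • x ∈ kBall x r ↔ s ∈ qhChord (‖u‖ / ‖x‖) r := by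
  rw [kBall, mem_ofPred_eq, ← norm_ne_zero_iff, norm_add_smul_eq_mul_qhRadius hx hu,
    qhDist_add_smul hx hu, mul_ne_zero_iff, and_iff_right (norm_ne_zero_iff.2 hx)]
  rfl

lemma exists_setOf_add_smul_mem_kBall_eq (hx : x ≠ 0) (w : E) (r : ℝ) :
    ∃ p₀ h, 0 ≤ h ∧ {t : ℝ | w + t • x ∈ kBall x r} = (p₀ + ·) ⁻¹' qhChord h r := by
  set p₀ := ⟪x, w⟫ / ‖x‖ ^ 2
  have hu : ⟪x, w - p₀ • x⟫ = 0 := by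
    rw [inner_sub_right, real_inner_smul_right, real_inner_self_eq_norm_sq,
      div_mul_cancel₀ _ (pow_ne_zero 2 (norm_ne_zero_iff.2 hx)), sub_self]
  refine ⟨p₀, ‖w - p₀ • x‖ / ‖x‖, by positivity, ext fun t => ?_⟩
  rw [mem_ofPred_eq, mem_preimage, ← add_smul_mem_kBall_iff hx hu]
  congr! 1
  module

theorem closeToConvex_kBall {lam r : ℝ} (hlam : 0 ≤ lam)
    (hW : ∀ θ ∈ Icc (π / 2) π, 0 ≤ θ + lam * cos θ) (hx : x ≠ 0) (hr : r ≤ lam) :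
    CloseToConvex (kBall x r) := by
  refine closeToConvex_of_sections hx (fun w => ?_) (fun w => ?_) <;>
    obtain ⟨p₀, h, hh, hsec⟩ := exists_setOf_add_smul_mem_kBall_eq hx w r <;> rw [hsec]
  · exact (IsometryEquiv.addLeft p₀).isometry.antilipschitz.isBounded_preimage
      (isBounded_qhChord h r)
  · exact (ordConnected_qhChord hlam hW hh hr).preimage_mono fun _ _ => (add_le_add_iff_left p₀).2

end InnerProductSpace

theorem kBall_closeToConvex_of_puncturedPlane_general
    (lam : ℝ) (hlam : lam ∈ Set.Ioo 2 Real.pi)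
    (hlam0 : Real.cos (Real.sqrt (lam ^ 2 - 1))
      + Real.sqrt (lam ^ 2 - 1) * Real.sin (Real.sqrt (lam ^ 2 - 1)) = 0)
    (x : EuclideanSpace ℝ (Fin 2)) (hx : x ≠ 0)
    (r : ℝ) (hr : r ≤ lam) :
    CloseToConvex (kBall x r) := by
  obtain ⟨a, ha, hsin, hzero⟩ := exists_add_mul_cos_eq_zero hlam hlam0
  refine closeToConvex_kBall (by linarith [hlam.1]) (fun θ hθ => ?_) hx hr
  have hmin : a + lam * cos a ≤ θ + lam * cos θ := isMinOn_add_mul_cos ha hsin hθ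
  linarith

/-- Klén, Theorem 3.2 (first part): in the punctured plane `G = ℝ² \ {0}`, for `x ∈ G` and
`0 < r ≤ λ`, where `λ ∈ (2,π)` solves `cos √(z²-1) + √(z²-1) sin √(z²-1) = 0`,
the quasihyperbolic disk `B_k(x,r)` is close-to-convex. -/
theorem kBall_closeToConvex_of_puncturedPlane
    (lam : ℝ) (hlam : lam ∈ Set.Ioo 2 Real.pi)
    (hlam0 : Real.cos (Real.sqrt (lam ^ 2 - 1))
      + Real.sqrt (lam ^ 2 - 1) * Real.sin (Real.sqrt (lam ^ 2 - 1)) = 0)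
    (x : EuclideanSpace ℝ (Fin 2)) (hx : x ≠ 0)
    (r : ℝ) (hr0 : 0 < r) (hr : r ≤ lam) :
    CloseToConvex (kBall x r) :=
  kBall_closeToConvex_of_puncturedPlane_general lam hlam hlam0 x hx r hr
end

section
/- Let n ≥ 2, let G = ℝⁿ \ {0}, let x ∈ G and let r > π. Then the quasihyperbolic ball B_k(x,r) is not close-to-convex; indeed ℝⁿ \ closure(B_k(x,r)) has a bounded component. -/
/-! On the sphere `‖y‖ = ‖x‖` the logarithmic term of `k` vanishes, so `k(x, y)` is just the
angle, at most `π < r`: the ball contains this whole sphere, yet it stays at distance at least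
`‖x‖ e^{-r}` from the origin. A half-line through `0` is connected and unbounded, hence meets the
sphere, so it cannot lie in the complement of the ball; and the component of `0` in the
complement of the closure is trapped inside the open ball of radius `‖x‖`. -/

open Set Metric Bornology InnerProductGeometry

lemma IsPreconnected.subset_ball_of_disjoint_sphere {α : Type*} [PseudoMetricSpace α]
    {s : Set α} {c : α} {R : ℝ} (hs : IsPreconnected s) (hsR : Disjoint s (sphere c R))
    (hne : (s ∩ ball c R).Nonempty) : s ⊆ ball c R := by
  refine hs.subset_left_of_subset_union (v := {y | R < dist y c}) isOpen_ball
    (isOpen_lt continuous_const (continuous_id.dist continuous_const))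
    (disjoint_left.mpr fun y hy hy' => (mem_ball.mp hy).not_gt hy') (fun y hy => ?_) hne
  rcases lt_trichotomy (dist y c) R with h | h | h
  · exact Or.inl h
  · exact absurd h (hsR.notMem_of_mem_left hy)
  · exact Or.inr h

lemma IsPreconnected.exists_dist_eq_of_not_isBounded {α : Type*} [PseudoMetricSpace α]
    {s : Set α} {c p : α} {R : ℝ} (hs : IsPreconnected s) (hsb : ¬IsBounded s) (hp : p ∈ s)
    (hpR : dist p c ≤ R) : ∃ q ∈ s, dist q c = R := by
  obtain ⟨q, hq, hRq⟩ : ∃ q ∈ s, R < dist q c := by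
    by_contra! h
    exact hsb ((isBounded_iff_subset_closedBall c).mpr ⟨R, h⟩)
  exact hs.intermediate_value hp hq (continuous_id.dist continuous_const).continuousOn
    ⟨hpR, hRq.le⟩

section HalfLine

variable {E : Type*} [NormedAddCommGroup E] [NormedSpace ℝ E] {S : Set E}

lemma IsHalfLine.exists_eq_image (hS : IsHalfLine S) :
    ∃ (z y : E) (I : Set ℝ), y ≠ 0 ∧ I.OrdConnected ∧ Ioi 0 ⊆ I ∧
      S = (fun t => z + t • y) '' I := by
  obtain ⟨z, y, hy, rfl | rfl⟩ := hS
  · exact ⟨z, y, Ioi 0, hy, ordConnected_Ioi, subset_rfl, by ext; simp [eq_comm]⟩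
  · exact ⟨z, y, Ici 0, hy, ordConnected_Ici, Ioi_subset_Ici_self, by ext; simp [eq_comm]⟩

lemma IsHalfLine.isPreconnected (hS : IsHalfLine S) : IsPreconnected S := by
  obtain ⟨z, y, I, -, hI, -, rfl⟩ := hS.exists_eq_image
  exact hI.isPreconnected.image _ (by fun_prop)

lemma IsHalfLine.not_isBounded (hS : IsHalfLine S) : ¬IsBounded S := by
  obtain ⟨z, y, I, hy, -, hIoi, rfl⟩ := hS.exists_eq_image
  rintro hb
  obtain ⟨C, hC⟩ := isBounded_iff_forall_norm_le.mp hb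
  have hy0 : 0 < ‖y‖ := norm_pos_iff.mpr hy
  set t := (max C 0 + ‖z‖ + 1) / ‖y‖
  have ht : 0 < t := by positivity
  have hty : ‖t • y‖ = max C 0 + ‖z‖ + 1 := by
    rw [norm_smul, Real.norm_of_nonneg ht.le, div_mul_cancel₀ _ hy0.ne']
  have hbound := hC _ ⟨t, hIoi ht, rfl⟩
  have htri : ‖t • y‖ ≤ ‖z + t • y‖ + ‖z‖ := by simpa using norm_sub_le (z + t • y) z
  linarith [le_max_left C 0]

end HalfLine

lemma not_closeToConvex_of_sphere_subset {E : Type*} [NormedAddCommGroup E] [NormedSpace ℝ E]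
    {G : Set E} {c p : E} {R : ℝ} (hp : p ∉ G) (hpR : dist p c ≤ R) (hG : sphere c R ⊆ G) :
    ¬CloseToConvex G := by
  rintro ⟨𝒞, hHL, -, hU⟩
  obtain ⟨S, hS𝒞, hpS⟩ : p ∈ ⋃₀ 𝒞 := hU ▸ hp
  obtain ⟨q, hqS, hqR⟩ := (hHL S hS𝒞).isPreconnected.exists_dist_eq_of_not_isBounded
    (hHL S hS𝒞).not_isBounded hpS hpR
  have hqG : q ∈ Gᶜ := hU ▸ ⟨S, hS𝒞, hqS⟩
  exact hqG (hG hqR)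

section QuasihyperbolicBall

variable {E : Type*} [NormedAddCommGroup E] [InnerProductSpace ℝ E] {x y : E} {r : ℝ}

lemma abs_log_norm_div_le_qhDist (x y : E) : |Real.log (‖x‖ / ‖y‖)| ≤ qhDist x y := by
  rw [qhDist, ← Real.sqrt_sq_eq_abs]
  exact Real.sqrt_le_sqrt (le_add_of_nonneg_left (sq_nonneg _))

lemma qhDist_eq_angle_of_norm_eq (h : ‖y‖ = ‖x‖) : qhDist x y = angle x y := by
  simp [qhDist, h, Real.sqrt_sq (angle_nonneg x y)]

lemma sphere_norm_subset_kBall (hx : x ≠ 0) (hr : Real.pi < r) : sphere 0 ‖x‖ ⊆ kBall x r := by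
  intro y hy
  rw [mem_sphere_zero_iff_norm] at hy
  refine ⟨norm_ne_zero_iff.mp (hy.trans_ne (norm_ne_zero_iff.mpr hx)), ?_⟩
  rw [qhDist_eq_angle_of_norm_eq hy]
  exact (angle_le_pi x y).trans_lt hr

lemma norm_lt_exp_mul_norm_of_mem_kBall (hy : y ∈ kBall x r) : ‖x‖ < Real.exp r * ‖y‖ := by
  have hy0 : 0 < ‖y‖ := norm_pos_iff.mpr hy.1
  have hlog : Real.log (‖x‖ / ‖y‖) < r :=
    (le_abs_self _).trans_lt ((abs_log_norm_div_le_qhDist x y).trans_lt hy.2)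
  rw [← div_lt_iff₀ hy0]
  exact Real.lt_exp_of_log_lt hlog

lemma zero_notMem_closure_kBall (hx : x ≠ 0) (r : ℝ) : (0 : E) ∉ closure (kBall x r) := by
  have hsub : closure (kBall x r) ⊆ {y | ‖x‖ ≤ Real.exp r * ‖y‖} :=
    closure_minimal (fun y hy => (norm_lt_exp_mul_norm_of_mem_kBall hy).le)
      (isClosed_le continuous_const (by fun_prop))
  intro h0
  simpa [hx] using hsub h0

end QuasihyperbolicBall

theorem kBall_not_closeToConvex_of_pi_lt_general {n : ℕ}
    (x : EuclideanSpace ℝ (Fin n)) (hx : x ≠ 0)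
    (r : ℝ) (hr : Real.pi < r) :
    ¬ CloseToConvex (kBall x r)
      ∧ ∃ z ∈ (closure (kBall x r))ᶜ,
          Bornology.IsBounded (connectedComponentIn (closure (kBall x r))ᶜ z) := by
  have hsphere := sphere_norm_subset_kBall hx hr
  have h0 : (0 : EuclideanSpace ℝ (Fin n)) ∉ closure (kBall x r) := zero_notMem_closure_kBall hx r
  have hcomp : connectedComponentIn (closure (kBall x r))ᶜ 0 ⊆ ball 0 ‖x‖ :=
    isPreconnected_connectedComponentIn.subset_ball_of_disjoint_sphere
      ((disjoint_compl_left.mono_right (hsphere.trans subset_closure)).mono_left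
        (connectedComponentIn_subset _ _))
      ⟨0, mem_connectedComponentIn h0, by simpa using hx⟩
  exact ⟨not_closeToConvex_of_sphere_subset (fun h => h0 (subset_closure h)) (by simp) hsphere,
    0, h0, isBounded_ball.subset hcomp⟩

/-- Klén, Remark 3.6: in the punctured space `G = ℝⁿ \ {0}`, `n ≥ 2`, for `x ∈ G` and
`r > π` the quasihyperbolic ball `B_k(x,r)` is not close-to-convex; indeed the complement
of its closure has a bounded (connected) component. -/
theorem kBall_not_closeToConvex_of_pi_lt {n : ℕ} (hn : 2 ≤ n)
    (x : EuclideanSpace ℝ (Fin n)) (hx : x ≠ 0)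
    (r : ℝ) (hr : Real.pi < r) :
    ¬ CloseToConvex (kBall x r)
      ∧ ∃ z ∈ (closure (kBall x r))ᶜ,
          Bornology.IsBounded (connectedComponentIn (closure (kBall x r))ᶜ z) :=
  kBall_not_closeToConvex_of_pi_lt_general x hx r hr
end

section
/- Let G = ℝ² \ {(−1,0), (1,0)} (equivalently ℂ \ {−1,1}) and let x = (0,√3). Then j_G(x, (0,−√3)) = log(1+√3), and for every h ∈ ℝ one has j_G(x, (h,−1)) ≥ log(29/10). -/
/-! The punctures `±e₀` form the whole boundary of `G`, and `x = (0,√3)`, `(0,-√3)` both lie at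
distance `2` from each of them, which gives the first value. Since `log (29/10) = log (1 + 19/10)`,
the second claim asks for `|x - z| ≥ 19/10 · min (d(x), d(z))` at `z = (h,-1)`, where
`|x - z|² = h² + 4 + 2√3` and `d(z)² = (|h| - 1)² + 1`: if `h² ≥ 7` then `|x - z|` exceeds
`19/10 · d(x) = 19/5`, and otherwise it exceeds `19/10 · d(z)`. -/

theorem Set.Finite.frontier_compl {E : Type*} [NormedAddCommGroup E] [NormedSpace ℝ E]
    [Nontrivial E] {s : Set E} (hs : s.Finite) : frontier sᶜ = s := by
  have hint : interior s = ∅ :=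
    interior_eq_empty_iff_dense_compl.2 (hs.countable.dense_compl ℝ)
  rw [_root_.frontier_compl, hs.isClosed.frontier_eq, hint, Set.sdiff_empty]

theorem Metric.infDist_pair {E : Type*} [MetricSpace E] (x a b : E) :
    infDist x {a, b} = min (dist x a) (dist x b) := by
  rw [infDist, Set.insert_eq, infEDist_union, infEDist_singleton,
    infEDist_singleton, ENNReal.toReal_min (edist_ne_top _ _) (edist_ne_top _ _),
    ← dist_edist, ← dist_edist]

theorem EuclideanSpace.dist_sq_fin_two (p q : EuclideanSpace ℝ (Fin 2)) :
    dist p q ^ 2 = (p 0 - q 0) ^ 2 + (p 1 - q 1) ^ 2 := by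
  rw [EuclideanSpace.dist_eq, Real.sq_sqrt (by positivity), Fin.sum_univ_two,
    Real.dist_eq, Real.dist_eq, sq_abs, sq_abs]

theorem log_le_jDist {E : Type*} [NormedAddCommGroup E] {G : Set E} {x y : E} {c : ℝ}
    (hc : 0 < c)
    (hpos : 0 < min (Metric.infDist x (frontier G)) (Metric.infDist y (frontier G)))
    (hle : (c - 1) * min (Metric.infDist x (frontier G)) (Metric.infDist y (frontier G))
      ≤ dist x y) :
    Real.log c ≤ jDist G x y :=
  Real.log_le_log hc (by linarith [(le_div_iff₀ hpos).2 hle])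

theorem nineteen_tenths_mul_min_le (h : ℝ) {D dm dp : ℝ} (hD : 0 ≤ D) (hdm : 0 ≤ dm)
    (hdp : 0 ≤ dp) (hD2 : D ^ 2 = h ^ 2 + (√3 + 1) ^ 2)
    (hdm2 : dm ^ 2 = (h + 1) ^ 2 + 1) (hdp2 : dp ^ 2 = (h - 1) ^ 2 + 1) :
    19 / 10 * min 2 (min dm dp) ≤ D := by
  wlog hh : 0 ≤ h generalizing h dm dp
  · rw [min_comm dm]
    exact this (-h) hdp hdm (by rw [hD2]; ring) (by rw [hdp2]; ring) (by rw [hdm2]; ring)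
      (by linarith)
  have hs3 : √3 ^ 2 = 3 := Real.sq_sqrt (by norm_num)
  have hs3_lb : (173 / 100 : ℝ) ≤ √3 := by
    rw [Real.le_sqrt (by norm_num) (by norm_num)]; norm_num
  rcases le_or_gt 7 (h ^ 2) with hfar | hnear
  · calc 19 / 10 * min 2 (min dm dp) ≤ 19 / 10 * 2 := by gcongr; exact min_le_left _ _
      _ ≤ D := by rw [← sq_le_sq₀ (by norm_num) hD, hD2]; nlinarith
  · have hh' : h < 8 / 3 := by nlinarith
    calc 19 / 10 * min 2 (min dm dp) ≤ 19 / 10 * dp := by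
          gcongr; exact (min_le_right _ _).trans (min_le_right _ _)
      _ ≤ D := by
          -- with `√3 ≥ 1.73` this reduces to `261 h² - 722 h - 24 ≤ 0`, true on `[0, 8/3]`
          rw [← sq_le_sq₀ (by positivity) hD, mul_pow, hdp2, hD2]
          nlinarith [mul_nonneg hh (sub_nonneg.2 hh'.le)]

/-- Klén, Remark 2.5 (1): in `G = ℝ² \ {(-1,0), (1,0)}` with `x = (0,√3)` one has
`j_G(x, (0,-√3)) = log (1+√3)`, while every point `z = (h,-1)` on the horizontal line
of height `-1` satisfies `j_G(x,z) ≥ log (29/10)`. -/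
theorem jDist_twice_punctured_plane
    (e₀ e₁ x y : EuclideanSpace ℝ (Fin 2)) (G : Set (EuclideanSpace ℝ (Fin 2)))
    (he₀ : e₀ = EuclideanSpace.single 0 1) (he₁ : e₁ = EuclideanSpace.single 1 1)
    (hG : G = ({-e₀, e₀} : Set (EuclideanSpace ℝ (Fin 2)))ᶜ)
    (hx : x = Real.sqrt 3 • e₁) (hy : y = -(Real.sqrt 3) • e₁) :
    jDist G x y = Real.log (1 + Real.sqrt 3)
      ∧ ∀ h : ℝ, Real.log (29 / 10) ≤ jDist G x (h • e₀ - e₁) := by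
  have hs3 : √3 ^ 2 = 3 := Real.sq_sqrt (by norm_num)
  have hfr : frontier G = {-e₀, e₀} := hG ▸ (Set.toFinite _).frontier_compl
  have dist_of_sq {p q : EuclideanSpace ℝ (Fin 2)} (r : ℝ) (hr : 0 ≤ r)
      (hsq : (p 0 - q 0) ^ 2 + (p 1 - q 1) ^ 2 = r ^ 2) : dist p q = r := by
    rwa [← sq_eq_sq₀ dist_nonneg hr, EuclideanSpace.dist_sq_fin_two]
  have hd_two (s : ℝ) (hs : s ^ 2 = 3) : Metric.infDist (s • e₁) (frontier G) = 2 := by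
    rw [hfr, Metric.infDist_pair, dist_of_sq 2 (by norm_num) (by simp [he₀, he₁]; linarith),
      dist_of_sq 2 (by norm_num) (by simp [he₀, he₁]; linarith), min_self]
  have hdx : Metric.infDist x (frontier G) = 2 := hx ▸ hd_two _ hs3
  refine ⟨?_, fun h => ?_⟩
  · have hdy : Metric.infDist y (frontier G) = 2 := hy ▸ hd_two _ (by rw [neg_sq, hs3])
    have hxy : dist x y = 2 * √3 := dist_of_sq _ (by positivity) (by simp [hx, hy, he₁]; ring)
    rw [jDist, hdx, hdy, hxy, min_self, mul_div_cancel_left₀ _ two_ne_zero]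
  · have hdz := Metric.infDist_pair (h • e₀ - e₁) (-e₀) e₀
    rw [← hfr] at hdz
    have hpos : 0 < Metric.infDist (h • e₀ - e₁) (frontier G) := by
      rw [hdz]
      refine lt_min (dist_pos.2 fun hp => ?_) (dist_pos.2 fun hp => ?_) <;>
        simpa [he₀, he₁, PiLp.single_apply] using congr_arg (· 1) hp
    refine log_le_jDist (by norm_num) (lt_min (by rw [hdx]; norm_num) hpos) ?_
    rw [hdx, hdz, show (29 / 10 : ℝ) - 1 = 19 / 10 by norm_num]
    refine nineteen_tenths_mul_min_le h dist_nonneg dist_nonneg dist_nonneg ?_ ?_ ?_ <;>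
      (rw [EuclideanSpace.dist_sq_fin_two]; simp [hx, he₀, he₁])
end

section
/- Let r ∈ (2,π], and for s ∈ (−r,r) set φ(s) = √(r²−s²), a(s) = φ(s)·cos φ(s) + s·sin φ(s) and b(s) = φ(s)·sin φ(s) − s·cos φ(s). Then b is differentiable on (−r,r) with b'(s) = −(1+s)·a(s)/φ(s), a(s) < 0 for all s ∈ (−r,0), and consequently b'(s) = 0 for s ∈ (−r,0) if and only if s = −1. -/
/-!
Differentiating `φ² = r² - s²` gives `φ' = -s/φ`, after which `b' = -(1+s)·a/φ` is a direct
computation. On `(-r,0)` we have `0 < φ ≤ r ≤ π`. If `φ ≥ π/2` then `cos φ ≤ 0 ≤ sin φ`, so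
both terms of `a = φ cos φ + s sin φ` are nonpositive, and one is negative. If `φ < π/2` then
`s² = r² - φ² > 4 - π²/4 > 1`, so `s < -1`, and `φ < tan φ` gives `a < (1 + s) sin φ < 0`.
-/

open Real

theorem mul_cos_add_mul_sin_neg_of_lt_pi_div_two {t s : ℝ} (ht₀ : 0 < t) (ht : t < π / 2)
    (hs : s ≤ -1) : t * cos t + s * sin t < 0 := by
  have hcos : 0 < cos t := cos_pos_of_mem_Ioo ⟨by linarith [pi_pos], ht⟩
  have hsin : 0 < sin t := sin_pos_of_pos_of_lt_pi ht₀ (by linarith [pi_pos])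
  have hmul_cos : t * cos t < sin t :=
    calc t * cos t < tan t * cos t := mul_lt_mul_of_pos_right (lt_tan ht₀ ht) hcos
      _ = sin t := tan_mul_cos hcos.ne'
  nlinarith

theorem mul_cos_add_mul_sin_neg_of_pi_div_two_le {t s : ℝ} (ht : π / 2 ≤ t) (htπ : t ≤ π)
    (hs : s < 0) : t * cos t + s * sin t < 0 := by
  have ht₀ : 0 < t := by linarith [pi_pos]
  have hcos : cos t ≤ 0 := cos_nonpos_of_pi_div_two_le_of_le ht (by linarith)
  rcases htπ.lt_or_eq with htπ | rfl
  · nlinarith [sin_pos_of_pos_of_lt_pi ht₀ htπ]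
  · simpa using ht₀

theorem mul_cos_add_mul_sin_neg {t s : ℝ} (ht₀ : 0 < t) (htπ : t ≤ π) (hs : s < 0)
    (hts : 1 + (π / 2) ^ 2 ≤ t ^ 2 + s ^ 2) : t * cos t + s * sin t < 0 := by
  rcases lt_or_ge t (π / 2) with ht | ht
  · refine mul_cos_add_mul_sin_neg_of_lt_pi_div_two ht₀ ht ?_
    nlinarith [pi_pos]
  · exact mul_cos_add_mul_sin_neg_of_pi_div_two_le ht htπ hs

theorem hasDerivAt_sqrt_sq_sub_sq {r s : ℝ} (hs : s ^ 2 < r ^ 2) :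
    HasDerivAt (fun x => √(r ^ 2 - x ^ 2)) (-s / √(r ^ 2 - s ^ 2)) s := by
  refine (((hasDerivAt_pow 2 s).const_sub (r ^ 2)).sqrt (sub_pos.2 hs).ne').congr_deriv ?_
  field_simp
  ring

theorem hasDerivAt_sqrt_mul_sin_sub_mul_cos {r s : ℝ} (hs : s ^ 2 < r ^ 2) :
    HasDerivAt (fun x => √(r ^ 2 - x ^ 2) * sin √(r ^ 2 - x ^ 2) - x * cos √(r ^ 2 - x ^ 2))
      (-(1 + s) * (√(r ^ 2 - s ^ 2) * cos √(r ^ 2 - s ^ 2) + s * sin √(r ^ 2 - s ^ 2)) /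
        √(r ^ 2 - s ^ 2)) s := by
  have hφ := hasDerivAt_sqrt_sq_sub_sq hs
  have hpos : 0 < √(r ^ 2 - s ^ 2) := sqrt_pos.2 (sub_pos.2 hs)
  refine ((hφ.mul hφ.sin).sub ((hasDerivAt_id' s).mul hφ.cos)).congr_deriv ?_
  field_simp
  ring

/-- Klén, proof of Theorem 3.2: for `r ∈ (2,π]`, with `φ(s) = √(r²-s²)`,
`a(s) = φ(s) cos φ(s) + s sin φ(s)` and `b(s) = φ(s) sin φ(s) - s cos φ(s)`,
the function `b` has derivative `b'(s) = -(1+s) a(s)/φ(s)` on `(-r,r)`,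
`a(s) < 0` on `(-r,0)`, and hence `b'(s) = 0` for `s ∈ (-r,0)` iff `s = -1`. -/
theorem tangent_vector_derivative (r : ℝ) (hr : r ∈ Set.Ioc 2 Real.pi)
    (φ a b : ℝ → ℝ)
    (hφ : ∀ s, φ s = Real.sqrt (r ^ 2 - s ^ 2))
    (ha : ∀ s, a s = φ s * Real.cos (φ s) + s * Real.sin (φ s))
    (hb : ∀ s, b s = φ s * Real.sin (φ s) - s * Real.cos (φ s)) :
    (∀ s ∈ Set.Ioo (-r) r, HasDerivAt b (-(1 + s) * a s / φ s) s)
      ∧ (∀ s ∈ Set.Ioo (-r) 0, a s < 0)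
      ∧ (∀ s ∈ Set.Ioo (-r) 0, (-(1 + s) * a s / φ s = 0 ↔ s = -1)) := by
  obtain ⟨hr2, hrπ⟩ := hr
  obtain rfl : φ = fun s => √(r ^ 2 - s ^ 2) := funext hφ
  obtain rfl : a = _ := funext ha
  obtain rfl : b = _ := funext hb
  have hsq : ∀ s ∈ Set.Ioo (-r) 0, s ^ 2 < r ^ 2 :=
    fun s hs => sq_lt_sq' hs.1 (by linarith [hs.2])
  have hφ_pos : ∀ s ∈ Set.Ioo (-r) 0, 0 < √(r ^ 2 - s ^ 2) :=
    fun s hs => sqrt_pos.2 (sub_pos.2 (hsq s hs))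
  have ha_neg : ∀ s ∈ Set.Ioo (-r) 0,
      √(r ^ 2 - s ^ 2) * cos √(r ^ 2 - s ^ 2) + s * sin √(r ^ 2 - s ^ 2) < 0 := by
    intro s hs
    refine mul_cos_add_mul_sin_neg (hφ_pos s hs) ?_ hs.2 ?_
    · exact sqrt_le_iff.2 ⟨by linarith [pi_pos], by nlinarith⟩
    · rw [sq_sqrt (sub_pos.2 (hsq s hs)).le]
      nlinarith [pi_lt_d2]
  refine ⟨fun s hs => hasDerivAt_sqrt_mul_sin_sub_mul_cos (sq_lt_sq' hs.1 hs.2), ha_neg,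
    fun s hs => ?_⟩
  beta_reduce
  rw [div_eq_zero_iff, or_iff_left (hφ_pos s hs).ne', mul_eq_zero, or_iff_left (ha_neg s hs).ne,
    neg_eq_zero, add_eq_zero_iff_neg_eq, eq_comm]
end
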